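/- arXiv:2004.12479 — 7 statements merged into one kernel-verified Lean document; each statement's English description precedes it below -/
import Mathlib

section
/- Let m ≥ 1 and let (v_n)_{n ∈ ℤ^m \ {0}} be complex coefficients with |v_n| ≤ K e^{−c‖n‖} for some constants K, c > 0. Then for Lebesgue-almost every ω ∈ ℝ^m the series Σ_{n ≠ 0} |v_n|² / (n·ω)² converges, i.e. Δ(ω) < ∞ almost everywhere. -/
open MeasureTheory Filter Topology
open scoped ENNReal

/-- Dot product of an integer vector with a real frequency vector. -/
noncomputable def dotZ {m : ℕ} (n : Fin m → ℤ) (ω : EuclideanSpace ℝ (Fin m)) : ℝ :=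
  ∑ i, (n i : ℝ) * ω i

/-- Euclidean norm of an integer vector. -/
noncomputable def normZ {m : ℕ} (n : Fin m → ℤ) : ℝ :=
  Real.sqrt (∑ i, ((n i : ℝ)) ^ 2)

/-- The trajectory size Δ(ω) = ( Σ_{n ≠ 0} |v_n|² / (n·ω)² )^{1/2} ∈ [0,∞],
    with a summand having `n·ω = 0` and `v n ≠ 0` equal to `∞`. -/
noncomputable def trajSize {m : ℕ} (v : (Fin m → ℤ) → ℂ) (ω : EuclideanSpace ℝ (Fin m)) :
    ℝ≥0∞ :=
  (∑' n : {n : Fin m → ℤ // n ≠ 0},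
      (ENNReal.ofReal (‖v n.1‖)) ^ 2 / ENNReal.ofReal (dotZ n.1 ω ^ 2)) ^
    ((1 : ℝ) / 2)

/-! Let `G(ω) = ∑_{n ≠ 0} e^{-c‖n‖/4} |n · ω|^{-1/2}`. Since `|t|^{-1/2}` is locally integrable
on `ℝ`, integrating out a coordinate `i` with `n i ≠ 0` (Fubini, then the affine substitution
`t ↦ n i * t + b` with `|n i| ≥ 1`) bounds `∫ |n · x|^{-1/2}` over a box uniformly in `n`; the
weights being summable, `G` is integrable on every box, hence finite almost everywhere.
Where `G(ω) < ∞`, each term gives `|n · ω|^{-2} ≤ G(ω)^4 e^{c‖n‖}`, so the `n`-th summand is at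
most `K² G(ω)^4 e^{-c‖n‖}`, which is summable. -/

open Set

/-- `|u|^{-1/2}`, with value `(0 : ℝ≥0∞)⁻¹ = ⊤` at `u = 0`: finiteness of a weighted sum of
`invSqrtAbs (n · ω)` thus forces `n · ω ≠ 0`. -/
noncomputable def invSqrtAbs (u : ℝ) : ℝ≥0∞ := (ENNReal.ofReal √|u|)⁻¹

@[fun_prop]
lemma measurable_invSqrtAbs : Measurable invSqrtAbs := by
  unfold invSqrtAbs; fun_prop

lemma invSqrtAbs_pow_four (u : ℝ) : invSqrtAbs u ^ 4 = (ENNReal.ofReal (u ^ 2))⁻¹ := by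
  rw [invSqrtAbs, ← ENNReal.inv_pow, ← ENNReal.ofReal_pow (Real.sqrt_nonneg _),
    show (4 : ℕ) = 2 * 2 from rfl, pow_mul, Real.sq_sqrt (abs_nonneg u), sq_abs]

lemma invSqrtAbs_le_one {u : ℝ} (hu : 1 ≤ |u|) : invSqrtAbs u ≤ 1 := by
  rw [invSqrtAbs, ENNReal.inv_le_one, ← ENNReal.ofReal_one]
  exact ENNReal.ofReal_le_ofReal (Real.one_le_sqrt.mpr hu)

lemma setLIntegral_invSqrtAbs_Icc_zero_one : ∫⁻ u in Icc 0 1, invSqrtAbs u = 2 := by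
  have hint : IntegrableOn (fun u : ℝ => u ^ (-(1 / 2) : ℝ)) (Ioc 0 1) := by
    rw [integrableOn_Ioc_iff_integrableOn_Ioo]
    exact (intervalIntegral.integrableOn_Ioo_rpow_iff one_pos).2 (by norm_num)
  rw [setLIntegral_congr Ioc_ae_eq_Icc.symm]
  calc ∫⁻ u in Ioc 0 1, invSqrtAbs u
      = ∫⁻ u in Ioc 0 1, ENNReal.ofReal (u ^ (-(1 / 2) : ℝ)) := by
        refine setLIntegral_congr_fun measurableSet_Ioc fun u hu => ?_
        rw [invSqrtAbs, abs_of_pos hu.1, Real.rpow_neg hu.1.le, ← Real.sqrt_eq_rpow,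
          ENNReal.ofReal_inv_of_pos (Real.sqrt_pos.2 hu.1)]
    _ = ENNReal.ofReal (∫ u in (0 : ℝ)..1, u ^ (-(1 / 2) : ℝ)) := by
        rw [intervalIntegral.integral_of_le zero_le_one,
          ofReal_integral_eq_lintegral_ofReal hint
            ((ae_restrict_iff' measurableSet_Ioc).2 (ae_of_all _ fun u hu =>
              Real.rpow_nonneg hu.1.le _))]
    _ = 2 := by
        rw [integral_rpow (Or.inl (by norm_num))]
        norm_num

lemma invSqrtAbs_le_indicator_add_one (u : ℝ) :
    invSqrtAbs u
      ≤ (Icc 0 1).indicator invSqrtAbs u + (Icc 0 1).indicator invSqrtAbs (-u) + 1 := by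
  rcases le_or_gt 1 |u| with hu | hu
  · exact (invSqrtAbs_le_one hu).trans le_add_self
  rcases le_total 0 u with h0 | h0
  · have hmem : u ∈ Icc (0 : ℝ) 1 := ⟨h0, (abs_lt.1 hu).2.le⟩
    rw [indicator_of_mem hmem, add_assoc]
    exact le_self_add
  · have hmem : -u ∈ Icc (0 : ℝ) 1 := ⟨neg_nonneg.2 h0, by linarith [(abs_lt.1 hu).1]⟩
    rw [indicator_of_mem hmem, invSqrtAbs, invSqrtAbs, abs_neg]
    exact le_add_self.trans le_self_add

lemma lintegral_comp_mul_add {f : ℝ → ℝ≥0∞} (hf : Measurable f) {a : ℝ} (ha : a ≠ 0) (b : ℝ) :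
    ∫⁻ t, f (a * t + b) = ENNReal.ofReal |a⁻¹| * ∫⁻ u, f u := by
  calc ∫⁻ t, f (a * t + b) = ∫⁻ u, f (u + b) ∂(Measure.map (a * ·) volume) :=
        (lintegral_map (hf.comp (measurable_add_const b)) (measurable_const_mul a)).symm
    _ = ENNReal.ofReal |a⁻¹| * ∫⁻ u, f u := by
        rw [Real.map_volume_mul_left ha, lintegral_smul_measure, smul_eq_mul,
          lintegral_add_right_eq_self]

lemma lintegral_invSqrtAbs_mul_add_le {μ : Measure ℝ} (hμ : μ ≤ volume) {a : ℝ} (ha : 1 ≤ |a|)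
    (b : ℝ) : ∫⁻ t, invSqrtAbs (a * t + b) ∂μ ≤ 4 + μ univ := by
  set h := (Icc (0 : ℝ) 1).indicator invSqrtAbs
  have hh : Measurable h := measurable_invSqrtAbs.indicator measurableSet_Icc
  have hh_comp : ∀ a' : ℝ, 1 ≤ |a'| → ∀ b', ∫⁻ t, h (a' * t + b') ≤ 2 := fun a' ha' b' => by
    rw [lintegral_comp_mul_add hh (abs_pos.1 (one_pos.trans_le ha')) b',
      lintegral_indicator measurableSet_Icc, setLIntegral_invSqrtAbs_Icc_zero_one]
    refine mul_le_of_le_one_left zero_le (ENNReal.ofReal_le_one.2 ?_)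
    rw [abs_inv]
    exact inv_le_one_of_one_le₀ ha'
  calc ∫⁻ t, invSqrtAbs (a * t + b) ∂μ
      ≤ ∫⁻ t, (h (a * t + b) + h (-a * t + -b) + 1) ∂μ := lintegral_mono fun t => by
        simpa only [neg_mul, neg_add] using invSqrtAbs_le_indicator_add_one (a * t + b)
    _ = ∫⁻ t, (h (a * t + b) + h (-a * t + -b)) ∂μ + μ univ := by
        rw [lintegral_add_right _ measurable_const, lintegral_const, one_mul]
    _ ≤ (∫⁻ t, h (a * t + b) + h (-a * t + -b)) + μ univ := by
        gcongr
    _ = (∫⁻ t, h (a * t + b)) + (∫⁻ t, h (-a * t + -b)) + μ univ := by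
        rw [lintegral_add_left (f := fun t => h (a * t + b)) (hh.comp (by fun_prop))]
    _ ≤ 2 + 2 + μ univ := by
        gcongr
        · exact hh_comp a ha b
        · exact hh_comp (-a) (by rwa [abs_neg]) (-b)
    _ = 4 + μ univ := by norm_num

lemma lintegral_invSqrtAbs_dot_le {m : ℕ} {μ : Measure ℝ} [SigmaFinite μ] (hμ : μ ≤ volume)
    {n : Fin m → ℤ} (hn : n ≠ 0) :
    ∫⁻ x, invSqrtAbs (∑ i, (n i : ℝ) * x i) ∂(Measure.pi fun _ => μ)
      ≤ (4 + μ univ) * μ univ ^ (m - 1) := by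
  obtain ⟨i, hi⟩ := Function.ne_iff.mp hn
  cases m with
  | zero => exact i.elim0
  | succ m =>
    set e := MeasurableEquiv.piFinSuccAbove (fun _ : Fin (m + 1) => ℝ) i
    have he : MeasurePreserving e.symm (μ.prod (Measure.pi fun _ => μ))
        (Measure.pi fun _ => μ) :=
      (measurePreserving_piFinSuccAbove (fun _ => μ) i).symm e
    have hsplit : ∀ t y, ∑ k, (n k : ℝ) * e.symm (t, y) k
        = n i * t + ∑ j, (n (i.succAbove j) : ℝ) * y j := fun t y => by
      simp [e, Fin.sum_univ_succAbove _ i]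
    have hni : (1 : ℝ) ≤ |(n i : ℝ)| := by exact_mod_cast Int.one_le_abs hi
    rw [← he.lintegral_comp_emb e.symm.measurableEmbedding,
      lintegral_prod_symm _ (by fun_prop)]
    simp only [hsplit]
    calc ∫⁻ y, ∫⁻ t, invSqrtAbs (n i * t + ∑ j, (n (i.succAbove j) : ℝ) * y j) ∂μ
          ∂(Measure.pi fun _ => μ)
        ≤ ∫⁻ _, (4 + μ univ) ∂(Measure.pi fun _ : Fin m => μ) :=
          lintegral_mono fun y => lintegral_invSqrtAbs_mul_add_le hμ hni _
      _ = (4 + μ univ) * μ univ ^ (m + 1 - 1) := by simp [Measure.pi_univ]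

lemma ae_of_forall_ae_pi_restrict_Icc {ι : Type*} [Fintype ι] {p : (ι → ℝ) → Prop}
    (h : ∀ R : ℕ, ∀ᵐ x ∂(Measure.pi fun _ : ι => volume.restrict (Icc (-(R : ℝ)) R)), p x) :
    ∀ᵐ x : ι → ℝ, p x := by
  have hcover : (⋃ R : ℕ, univ.pi fun _ : ι => Icc (-(R : ℝ)) R) = univ := by
    refine eq_univ_of_forall fun x => mem_iUnion.2 ⟨⌈‖x‖⌉₊, fun i _ => abs_le.1 ?_⟩
    exact (norm_le_pi_norm x i).trans (Nat.le_ceil _)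
  suffices ∀ᵐ x ∂(volume : Measure (ι → ℝ)).restrict univ, p x by
    rwa [Measure.restrict_univ] at this
  rw [← hcover, ae_restrict_iUnion_iff]
  intro R
  rw [volume_pi, Measure.restrict_pi_pi]
  exact h R

lemma measurable_invSqrtAbs_dot {m : ℕ} (n : Fin m → ℤ) :
    Measurable fun x : Fin m → ℝ => invSqrtAbs (∑ i, (n i : ℝ) * x i) := by
  fun_prop

lemma lintegral_tsum_mul_invSqrtAbs_dot_lt_top {m : ℕ} {μ : Measure ℝ} [IsFiniteMeasure μ]
    (hμ : μ ≤ volume) {r : {n : Fin m → ℤ // n ≠ 0} → ℝ≥0∞} (hr : ∑' n, r n < ⊤) :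
    ∫⁻ x, ∑' n, r n * invSqrtAbs (∑ i, (n.1 i : ℝ) * x i) ∂(Measure.pi fun _ => μ) < ⊤ := by
  rw [lintegral_tsum fun n : {n : Fin m → ℤ // n ≠ 0} =>
    ((measurable_invSqrtAbs_dot n.1).const_mul (r n)).aemeasurable]
  calc ∑' n, ∫⁻ x, r n * invSqrtAbs (∑ i, (n.1 i : ℝ) * x i) ∂(Measure.pi fun _ => μ)
      ≤ ∑' n, r n * ((4 + μ univ) * μ univ ^ (m - 1)) := ENNReal.tsum_le_tsum fun n => by
        rw [lintegral_const_mul _ (measurable_invSqrtAbs_dot n.1)]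
        gcongr
        exact lintegral_invSqrtAbs_dot_le hμ n.2
    _ < ⊤ := by
        rw [ENNReal.tsum_mul_right]
        exact ENNReal.mul_lt_top hr (by finiteness)

lemma ae_tsum_mul_invSqrtAbs_dot_lt_top {m : ℕ} {r : {n : Fin m → ℤ // n ≠ 0} → ℝ≥0∞}
    (hr : ∑' n, r n < ⊤) :
    ∀ᵐ x : Fin m → ℝ, ∑' n, r n * invSqrtAbs (∑ i, (n.1 i : ℝ) * x i) < ⊤ :=
  ae_of_forall_ae_pi_restrict_Icc fun _ =>
    ae_lt_top (.tsum fun n => (measurable_invSqrtAbs_dot n.1).const_mul _)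
      (lintegral_tsum_mul_invSqrtAbs_dot_lt_top Measure.restrict_le_self hr).ne

lemma ENNReal.tsum_fin_pi_prod {α : Type*} (f : α → ℝ≥0∞) (k : ℕ) :
    ∑' x : Fin k → α, ∏ i, f (x i) = (∑' a, f a) ^ k := by
  induction k with
  | zero => simp
  | succ k ih =>
    rw [← (Fin.consEquiv fun _ => α).tsum_eq, ENNReal.tsum_prod', pow_succ', ← ih,
      ← ENNReal.tsum_mul_right]
    refine tsum_congr fun a => ?_
    rw [← ENNReal.tsum_mul_left]
    refine tsum_congr fun x => ?_
    simp [Fin.consEquiv, Fin.prod_univ_succ]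

lemma summable_exp_neg_mul_abs_int {b : ℝ} (hb : 0 < b) :
    Summable fun j : ℤ => Real.exp (-b * |(j : ℝ)|) := by
  have h : Summable fun n : ℕ => Real.exp (-b * n) := by
    simpa only [mul_comm] using Real.summable_exp_nat_mul_iff.2 (neg_neg_of_pos hb)
  exact .of_nat_of_neg (h.congr fun n => by simp) (h.congr fun n => by simp)

lemma abs_le_normZ {m : ℕ} (n : Fin m → ℤ) (i : Fin m) : |(n i : ℝ)| ≤ normZ n := by
  rw [normZ, ← Real.sqrt_sq_eq_abs]
  exact Real.sqrt_le_sqrt (Finset.single_le_sum (f := fun i => (n i : ℝ) ^ 2)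
    (fun i _ => sq_nonneg _) (Finset.mem_univ i))

-- `m + 1` rather than `m`, so that the one-dimensional rate stays positive when `m = 0`.
lemma exp_neg_mul_normZ_le_prod {m : ℕ} (n : Fin m → ℤ) {b : ℝ} (hb : 0 ≤ b) :
    Real.exp (-b * normZ n) ≤ ∏ i, Real.exp (-(b / (m + 1)) * |(n i : ℝ)|) := by
  rw [← Real.exp_sum, Real.exp_le_exp, ← Finset.mul_sum, neg_mul, neg_mul, neg_le_neg_iff]
  have hsum : ∑ i, |(n i : ℝ)| ≤ m * normZ n := by
    simpa using Finset.sum_le_sum fun i (_ : i ∈ Finset.univ) => abs_le_normZ n i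
  have hN : 0 ≤ normZ n := Real.sqrt_nonneg _
  calc b / (m + 1) * ∑ i, |(n i : ℝ)| ≤ b / (m + 1) * (m * normZ n) := by gcongr
    _ ≤ b / (m + 1) * ((m + 1) * normZ n) := by gcongr; linarith
    _ = b * normZ n := by field_simp

lemma tsum_ofReal_exp_neg_mul_normZ_lt_top (m : ℕ) {b : ℝ} (hb : 0 < b) :
    ∑' n : Fin m → ℤ, ENNReal.ofReal (Real.exp (-b * normZ n)) < ⊤ := by
  set f : ℤ → ℝ≥0∞ := fun j => ENNReal.ofReal (Real.exp (-(b / (m + 1)) * |(j : ℝ)|))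
  have hf : ∑' j, f j < ⊤ := by
    rw [← ENNReal.ofReal_tsum_of_nonneg (fun _ => (Real.exp_pos _).le)
      (summable_exp_neg_mul_abs_int (by positivity))]
    exact ENNReal.ofReal_lt_top
  calc ∑' n : Fin m → ℤ, ENNReal.ofReal (Real.exp (-b * normZ n))
      ≤ ∑' n : Fin m → ℤ, ∏ i, f (n i) := ENNReal.tsum_le_tsum fun n => by
        rw [← ENNReal.ofReal_prod_of_nonneg fun i _ => (Real.exp_pos _).le]
        exact ENNReal.ofReal_le_ofReal (exp_neg_mul_normZ_le_prod n hb.le)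
    _ = (∑' j, f j) ^ m := ENNReal.tsum_fin_pi_prod f m
    _ < ⊤ := ENNReal.pow_lt_top hf

lemma ENNReal.tsum_mul_pow_lt_top {ι : Type*} {x r s : ι → ℝ≥0∞} {C : ℝ≥0∞} (hC : C ≠ ⊤)
    {k : ℕ} (hx : ∀ i, x i ≤ C * r i ^ (2 * k)) (hr : ∑' i, r i ^ k < ⊤)
    (hrs : ∑' i, r i * s i < ⊤) : ∑' i, x i * s i ^ k < ⊤ := by
  set G := ∑' i, r i * s i
  have hterm (i : ι) : x i * s i ^ k ≤ C * G ^ k * r i ^ k :=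
    calc x i * s i ^ k ≤ C * r i ^ (2 * k) * s i ^ k := by gcongr; exact hx i
      _ = C * r i ^ k * (r i * s i) ^ k := by ring
      _ ≤ C * r i ^ k * G ^ k := by gcongr; exact ENNReal.le_tsum i
      _ = C * G ^ k * r i ^ k := by ring
  calc ∑' i, x i * s i ^ k ≤ ∑' i, C * G ^ k * r i ^ k := ENNReal.tsum_le_tsum hterm
    _ = C * G ^ k * ∑' i, r i ^ k := ENNReal.tsum_mul_left
    _ < ⊤ := ENNReal.mul_lt_top (ENNReal.mul_lt_top hC.lt_top (ENNReal.pow_lt_top hrs)) hr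

theorem trajSize_finite_ae_general
    (m : ℕ) (v : (Fin m → ℤ) → ℂ)
    (K c : ℝ) (hc : 0 < c)
    (hdecay : ∀ n : Fin m → ℤ, ‖v n‖ ≤ K * Real.exp (-c * normZ n)) :
    ∀ᵐ ω : EuclideanSpace ℝ (Fin m) ∂volume,
      (∑' n : {n : Fin m → ℤ // n ≠ 0},
        (ENNReal.ofReal (‖v n.1‖)) ^ 2 / ENNReal.ofReal (dotZ n.1 ω ^ 2)) < ⊤ := by
  have hsum {b : ℝ} (hb : 0 < b) :
      ∑' n : {n : Fin m → ℤ // n ≠ 0}, ENNReal.ofReal (Real.exp (-b * normZ n.1)) < ⊤ :=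
    (ENNReal.tsum_comp_le_tsum_of_injective Subtype.val_injective _).trans_lt
      (tsum_ofReal_exp_neg_mul_normZ_lt_top m hb)
  set r : {n : Fin m → ℤ // n ≠ 0} → ℝ≥0∞ :=
    fun n => ENNReal.ofReal (Real.exp (-(c / 4) * normZ n.1))
  have hr_pow (n) : r n ^ 4 = ENNReal.ofReal (Real.exp (-c * normZ n.1)) := by
    rw [← ENNReal.ofReal_pow (Real.exp_pos _).le, ← Real.exp_nat_mul]
    ring_nf
  have hv (n) : ENNReal.ofReal ‖v n.1‖ ^ 2 ≤ ENNReal.ofReal K ^ 2 * r n ^ (2 * 4) := by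
    rw [mul_comm 2, pow_mul, hr_pow, ← mul_pow, ← ENNReal.ofReal_mul' (Real.exp_pos _).le]
    gcongr
    exact hdecay n
  have hae : ∀ᵐ ω : EuclideanSpace ℝ (Fin m), ∑' n, r n * invSqrtAbs (dotZ n.1 ω) < ⊤ :=
    (PiLp.volume_preserving_ofLp (Fin m)).quasiMeasurePreserving.ae
      (ae_tsum_mul_invSqrtAbs_dot_lt_top (hsum (by positivity)))
  filter_upwards [hae] with ω hω
  simp_rw [div_eq_mul_inv, ← invSqrtAbs_pow_four]
  exact ENNReal.tsum_mul_pow_lt_top (by finiteness) hv (by simpa only [hr_pow] using hsum hc) hω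

/-- If the Fourier coefficients decay exponentially, the series defining Δ(ω)² converges
(equivalently Δ(ω) < ∞) for Lebesgue-almost every ω ∈ ℝ^m. -/
theorem trajSize_finite_ae
    (m : ℕ) (hm : 1 ≤ m) (v : (Fin m → ℤ) → ℂ)
    (K c : ℝ) (hK : 0 < K) (hc : 0 < c)
    (hdecay : ∀ n : Fin m → ℤ, ‖v n‖ ≤ K * Real.exp (-c * normZ n)) :
    ∀ᵐ ω : EuclideanSpace ℝ (Fin m) ∂volume,
      (∑' n : {n : Fin m → ℤ // n ≠ 0},
        (ENNReal.ofReal (‖v n.1‖)) ^ 2 / ENNReal.ofReal (dotZ n.1 ω ^ 2)) < ⊤ :=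
  trajSize_finite_ae_general m v K c hc hdecay
end

section
/- Let m ≥ 2 and let (v_n)_{n ∈ ℤ^m \ {0}} be complex coefficients with v_n ≠ 0 for every n. Then the trajectory size Δ : ℝ^m → [0, +∞] is unbounded on every nonempty open subset of ℝ^m; consequently Δ is discontinuous at every point ω₀ at which Δ(ω₀) < ∞. -/
open MeasureTheory Filter Topology
open scoped ENNReal

/-!
A single resonance `n · ω = 0` with `v_n ≠ 0` already makes `Δ(ω)` infinite. For `m ≥ 2`
resonant frequencies are dense: any `ω` whose first two coordinates are nonzero rationals
satisfies an integer relation between them. So `Δ = ∞` on a dense set, which forces `Δ` to be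
unbounded on every open set, and a function equal to `∞` on a dense set can only be continuous
at points where it is `∞`.
-/

section DenseLevelSet

variable {X Y : Type*} [TopologicalSpace X] [TopologicalSpace Y]

theorem ContinuousAt.eq_of_dense_setOf_eq [T1Space Y] {f : X → Y} {x : X} {c : Y}
    (hf : ContinuousAt f x) (hD : Dense {y | f y = c}) : f x = c := by
  have hx : f x ∈ closure (f '' {y | f y = c}) := mem_closure_image hf (hD x)
  have himage : f '' {y | f y = c} ⊆ {c} := Set.image_subset_iff.2 fun _ hy => hy
  simpa using closure_mono himage hx

theorem Dense.biSup_eq_top_of_isOpen {L : Type*} [CompleteLattice L] {f : X → L}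
    (hD : Dense {x | f x = ⊤}) {U : Set X} (hU : IsOpen U) (hne : U.Nonempty) :
    ⨆ x ∈ U, f x = ⊤ := by
  obtain ⟨x, hxU, hx⟩ := hD.inter_open_nonempty U hU hne
  exact top_le_iff.mp (hx ▸ le_iSup₂ (f := fun x _ => f x) x hxU)

end DenseLevelSet

section Resonance

variable {m : ℕ}

theorem dotZ_single_sub_single (i j : Fin m) (a b : ℤ) (ω : EuclideanSpace ℝ (Fin m)) :
    dotZ (Pi.single i a - Pi.single j b) ω = a * ω i - b * ω j := by
  simp [dotZ, sub_mul, Finset.sum_sub_distrib, Pi.single_apply]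

theorem exists_dotZ_eq_zero_of_eq_rat_mul {ω : EuclideanSpace ℝ (Fin m)} {i j : Fin m}
    (hij : i ≠ j) (q : ℚ) (h : ω i = q * ω j) : ∃ n ≠ 0, dotZ n ω = 0 := by
  refine ⟨Pi.single i (q.den : ℤ) - Pi.single j q.num, fun hn => ?_, ?_⟩
  · have := congrFun hn i
    simp [hij] at this
  · rw [dotZ_single_sub_single, h, Rat.cast_def]
    have : (q.den : ℝ) ≠ 0 := by exact_mod_cast q.den_nz
    push_cast
    field_simp
    ring

theorem dense_setOf_exists_dotZ_eq_zero (hm : 2 ≤ m) :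
    Dense {ω : EuclideanSpace ℝ (Fin m) | ∃ n ≠ 0, dotZ n ω = 0} := by
  set i : Fin m := ⟨0, by omega⟩
  set j : Fin m := ⟨1, by omega⟩
  have hij : i ≠ j := by simp [i, j, Fin.ext_iff]
  have hrat : Dense (Set.univ.pi fun _ : Fin m => Set.range ((↑) : ℚ → ℝ) \ {0}) :=
    dense_pi _ fun _ _ => Rat.denseRange_cast.sdiff_singleton 0
  refine (hrat.preimage (EuclideanSpace.equiv (Fin m) ℝ).toHomeomorph.isOpenMap).mono ?_
  intro ω hω
  obtain ⟨⟨a, ha : (a : ℝ) = ω i⟩, -⟩ := hω i trivial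
  obtain ⟨⟨b, hb : (b : ℝ) = ω j⟩, hb0 : ω j ≠ 0⟩ := hω j trivial
  refine exists_dotZ_eq_zero_of_eq_rat_mul hij (a / b) ?_
  rw [← hb] at hb0
  rw [← ha, ← hb, Rat.cast_div, div_mul_cancel₀ _ hb0]

end Resonance

theorem trajSize_eq_top_of_dotZ_eq_zero {m : ℕ} (v : (Fin m → ℤ) → ℂ)
    {ω : EuclideanSpace ℝ (Fin m)} {n : Fin m → ℤ} (hn : n ≠ 0) (hvn : v n ≠ 0)
    (hd : dotZ n ω = 0) : trajSize v ω = ⊤ := by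
  have hterm : ENNReal.ofReal ‖v n‖ ^ 2 / ENNReal.ofReal (dotZ n ω ^ 2) = ⊤ := by
    rw [hd, zero_pow two_ne_zero, ENNReal.ofReal_zero]
    exact ENNReal.div_zero (by positivity)
  rw [trajSize, ENNReal.tsum_eq_top_of_eq_top ⟨⟨n, hn⟩, hterm⟩]
  exact ENNReal.top_rpow_of_pos one_half_pos

theorem dense_setOf_trajSize_eq_top {m : ℕ} (hm : 2 ≤ m) (v : (Fin m → ℤ) → ℂ)
    (hv : ∀ n : Fin m → ℤ, n ≠ 0 → v n ≠ 0) :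
    Dense {ω : EuclideanSpace ℝ (Fin m) | trajSize v ω = ⊤} := by
  refine (dense_setOf_exists_dotZ_eq_zero hm).mono ?_
  rintro ω ⟨n, hn, hd⟩
  exact trajSize_eq_top_of_dotZ_eq_zero v hn (hv n hn) hd

/-- If all Fourier coefficients are nonzero (m ≥ 2), the trajectory size Δ is unbounded on
every nonempty open subset of ℝ^m; consequently Δ is discontinuous at every point where it
is finite. -/
theorem trajSize_unbounded_on_open_and_discontinuous
    (m : ℕ) (hm : 2 ≤ m) (v : (Fin m → ℤ) → ℂ)
    (hv : ∀ n : Fin m → ℤ, n ≠ 0 → v n ≠ 0) :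
    (∀ U : Set (EuclideanSpace ℝ (Fin m)), IsOpen U → U.Nonempty →
      ⨆ ω ∈ U, trajSize v ω = ⊤) ∧
    (∀ ω₀ : EuclideanSpace ℝ (Fin m), trajSize v ω₀ < ⊤ →
      ¬ ContinuousAt (trajSize v) ω₀) := by
  have hD := dense_setOf_trajSize_eq_top hm v hv
  exact ⟨fun U hU hne => hD.biSup_eq_top_of_isOpen hU hne,
    fun ω₀ hfin hcont => hfin.ne (hcont.eq_of_dense_setOf_eq hD)⟩
end

section
/- Let m ≥ 1 and τ > m − 1. Then the set of ω ∈ ℝ^m for which there exists a constant C > 0 such that |n·ω| ≥ C ‖n‖^{−τ} for every n ∈ ℤ^m \ {0} has full Lebesgue measure (its complement is Lebesgue-null). -/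
open MeasureTheory Filter Topology
open scoped ENNReal

open Metric

/-!
For nonzero `n ∈ ℤ^m`, the points `x` of the cube `[-R, R]^m` with `|n·x| ≤ c‖n‖^{-τ}` form a slab
of volume at most `2c (2R)^{m-1} ‖n‖_∞^{-τ-1}`: the shear replacing the coordinate where `|n_i|`
is maximal by `n·x` has determinant `n_i` and maps the slab into a box. Since `‖n‖_∞ ≤ ‖n‖` and
`∑_{n ≠ 0} ‖n‖_∞^{-τ-1} < ∞` for `τ + 1 > m` (the lattice `p`-series), the non-Diophantine points
of the cube, which lie in the union of these slabs for every `c > 0`, form a null set.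

The norms on `ι → ℤ` and `ι → ℝ` are Mathlib's sup norms; only `normZ` is Euclidean.
-/

lemma Int.pi_norm_cast_real {ι : Type*} [Fintype ι] (n : ι → ℤ) :
    ‖(fun i => (n i : ℝ))‖ = ‖n‖ := by
  simp only [Pi.norm_def]
  congr

lemma summable_norm_rpow_of_lt_neg_card {ι : Type*} [Fintype ι] {r : ℝ}
    (hr : r < -Fintype.card ι) : Summable fun n : ι → ℤ => ‖n‖ ^ r := by
  let b := Pi.basisFun ℝ ι
  let L := Submodule.span ℤ (Set.range b)
  have hrank : Module.finrank ℤ L = Fintype.card ι := by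
    rw [ZLattice.rank ℝ L, Module.finrank_fintype_fun_eq_card]
  let e := (b.restrictScalars ℤ).equivFun.symm
  have he : ∀ n, ‖(e n : ι → ℝ)‖ = ‖n‖ := by
    classical
    intro n
    rw [← Int.pi_norm_cast_real]
    congr 1
    ext j
    simp [e, b, Finset.sum_apply, Pi.basisFun_apply, Pi.single_apply]
  have := (ZLattice.summable_norm_rpow L r (by rwa [hrank])).comp_injective e.injective
  simpa [Function.comp_def, he] using this

lemma exists_norm_eq_abs_apply {ι : Type*} [Fintype ι] (a : ι → ℝ) (ha : a ≠ 0) :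
    ∃ i₀, ‖a‖ = |a i₀| := by
  obtain ⟨i, -⟩ := Function.ne_iff.1 ha
  obtain ⟨i₀, -, h⟩ := Finset.exists_mem_eq_sup Finset.univ ⟨i, Finset.mem_univ i⟩
    fun i => ‖a i‖₊
  exact ⟨i₀, by rw [Pi.norm_def, h]; rfl⟩

lemma volume_pi_update_Icc {ι : Type*} [Fintype ι] [DecidableEq ι] (i₀ : ι) (δ R : ℝ) :
    volume (Set.univ.pi (Function.update (fun _ : ι => Set.Icc (-R) R) i₀ (Set.Icc (-δ) δ)))
      = ENNReal.ofReal (2 * δ) * ENNReal.ofReal (2 * R) ^ (Fintype.card ι - 1) := by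
  have hvol : ∀ r : ℝ, volume (Set.Icc (-r) r) = ENNReal.ofReal (2 * r) := fun r => by
    rw [Real.volume_Icc]; ring_nf
  have hupd : (fun i => volume (Function.update (fun _ : ι => Set.Icc (-R) R) i₀
      (Set.Icc (-δ) δ) i)) = Function.update (fun _ => ENNReal.ofReal (2 * R)) i₀
      (ENNReal.ofReal (2 * δ)) := by
    funext i
    rw [Function.apply_update (fun _ s => volume s), hvol, hvol]
  rw [volume_pi_pi, hupd, Finset.prod_update_of_mem (Finset.mem_univ i₀), Finset.prod_const,
    Finset.card_sdiff, Finset.card_univ]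
  simp

lemma volume_abs_dotProduct_le_inter_closedBall_le {ι : Type*} [Fintype ι]
    {a : ι → ℝ} (ha : a ≠ 0) (δ R : ℝ) :
    volume ({x : ι → ℝ | |a ⬝ᵥ x| ≤ ‖a‖ * δ} ∩ closedBall 0 R)
      ≤ ENNReal.ofReal (2 * δ) * ENNReal.ofReal (2 * R) ^ (Fintype.card ι - 1) := by
  classical
  obtain ⟨i₀, hi₀⟩ := exists_norm_eq_abs_apply a ha
  set S := {x : ι → ℝ | |a ⬝ᵥ x| ≤ ‖a‖ * δ} ∩ closedBall 0 R
  set T := Matrix.toLin' ((1 : Matrix ι ι ℝ).updateRow i₀ a)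
  have hT : ∀ x, T x = Function.update x i₀ (a ⬝ᵥ x) := fun x => by
    simp [T, Matrix.updateRow_mulVec]
  have hdet : LinearMap.det T = a i₀ := by
    rw [LinearMap.det_toLin', ← Matrix.cramer_transpose_apply, Matrix.transpose_one,
      Matrix.cramer_one]
    rfl
  have himage : T '' S ⊆ Set.univ.pi
      (Function.update (fun _ => Set.Icc (-R) R) i₀ (Set.Icc (-(‖a‖ * δ)) (‖a‖ * δ))) := by
    rintro _ ⟨x, ⟨hdot, hx⟩, rfl⟩ i -
    rw [hT]
    rcases eq_or_ne i i₀ with rfl | hi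
    · simpa using abs_le.1 hdot
    · simpa [hi] using abs_le.1 ((norm_le_pi_norm x i).trans (mem_closedBall_zero_iff.1 hx))
  have hle := measure_mono (μ := volume) himage
  rw [Measure.addHaar_image_linearMap, hdet, ← hi₀, volume_pi_update_Icc,
    mul_left_comm, ENNReal.ofReal_mul (norm_nonneg a), mul_assoc] at hle
  have hpos : ENNReal.ofReal ‖a‖ ≠ 0 := by simpa using ha
  exact (ENNReal.mul_le_mul_iff_right hpos ENNReal.ofReal_ne_top).1 hle

lemma ENNReal.eq_zero_of_forall_le_ofReal_mul {a K : ℝ≥0∞} (hK : K ≠ ∞)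
    (h : ∀ c : ℝ, 0 < c → a ≤ ENNReal.ofReal c * K) : a = 0 := by
  have hlim : Tendsto (fun c : ℝ => ENNReal.ofReal c * K) (𝓝[>] 0) (𝓝 0) := by
    simpa using ENNReal.Tendsto.mul_const (ENNReal.tendsto_ofReal
      (tendsto_nhdsWithin_of_tendsto_nhds (tendsto_id (x := 𝓝 (0 : ℝ))))) (Or.inr hK)
  exact le_antisymm (ge_of_tendsto hlim (eventually_nhdsWithin_of_forall h)) bot_le

lemma volume_abs_intCast_dotProduct_le_inter_closedBall_le {ι : Type*} [Fintype ι]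
    {n : ι → ℤ} (hn : n ≠ 0) {c : ℝ} (hc : 0 ≤ c) (τ R : ℝ) :
    volume ({x : ι → ℝ | |(fun i => (n i : ℝ)) ⬝ᵥ x| ≤ c * ‖n‖ ^ (-τ)} ∩ closedBall 0 R)
      ≤ ENNReal.ofReal c * (2 * ENNReal.ofReal (2 * R) ^ (Fintype.card ι - 1) *
        ENNReal.ofReal (‖n‖ ^ (-τ - 1))) := by
  have hnorm : ‖n‖ ≠ 0 := norm_ne_zero_iff.2 hn
  have hδ : c * ‖n‖ ^ (-τ) = ‖(fun i => (n i : ℝ))‖ * (c * ‖n‖ ^ (-τ - 1)) := by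
    rw [Int.pi_norm_cast_real, Real.rpow_sub_one hnorm]
    field_simp
  have hn' : (fun i => (n i : ℝ)) ≠ 0 := fun h =>
    hnorm (by rw [← Int.pi_norm_cast_real, h, norm_zero])
  rw [hδ]
  refine (volume_abs_dotProduct_le_inter_closedBall_le hn' _ R).trans_eq ?_
  rw [ENNReal.ofReal_mul zero_le_two, ENNReal.ofReal_mul hc, ENNReal.ofReal_ofNat]
  ring

theorem ae_exists_forall_le_abs_intCast_dotProduct {ι : Type*} [Fintype ι] {τ : ℝ}
    (hτ : (Fintype.card ι : ℝ) < τ + 1) :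
    ∀ᵐ x : ι → ℝ, ∃ C > 0, ∀ n : ι → ℤ, n ≠ 0 →
      C * ‖n‖ ^ (-τ) ≤ |(fun i => (n i : ℝ)) ⬝ᵥ x| := by
  set bad := {x : ι → ℝ | ¬∃ C > 0, ∀ n : ι → ℤ, n ≠ 0 →
    C * ‖n‖ ^ (-τ) ≤ |(fun i => (n i : ℝ)) ⬝ᵥ x|}
  suffices h : ∀ R : ℕ, volume (bad ∩ closedBall 0 R) = 0 by
    refine measure_mono_null (fun x hx => ?_) (measure_iUnion_null h)
    obtain ⟨R, hR⟩ := Set.mem_iUnion.1 (iUnion_closedBall_nat (0 : ι → ℝ) ▸ Set.mem_univ x)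
    exact Set.mem_iUnion.2 ⟨R, hx, hR⟩
  intro R
  have hsum : ∑' n : ι → ℤ, ENNReal.ofReal (‖n‖ ^ (-τ - 1)) ≠ ∞ := by
    rw [← ENNReal.ofReal_tsum_of_nonneg (fun n => by positivity)
      (summable_norm_rpow_of_lt_neg_card (by linarith))]
    exact ENNReal.ofReal_ne_top
  refine ENNReal.eq_zero_of_forall_le_ofReal_mul (K := 2 * ENNReal.ofReal (2 * R) ^
    (Fintype.card ι - 1) * ∑' n : ι → ℤ, ENNReal.ofReal (‖n‖ ^ (-τ - 1)))
    (by finiteness) fun c hc => ?_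
  have hcover : bad ∩ closedBall 0 R ⊆ ⋃ n : {n : ι → ℤ // n ≠ 0},
      {x | |(fun i => (n.1 i : ℝ)) ⬝ᵥ x| ≤ c * ‖n.1‖ ^ (-τ)} ∩ closedBall 0 R := by
    rintro x ⟨hx, hR⟩
    simp only [bad, Set.mem_ofPred_eq, not_exists, not_and, not_forall, not_le] at hx
    obtain ⟨n, hn, hlt⟩ := hx c hc
    exact Set.mem_iUnion.2 ⟨⟨n, hn⟩, hlt.le, hR⟩
  calc volume (bad ∩ closedBall 0 R)
      ≤ ∑' n : {n : ι → ℤ // n ≠ 0}, volume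
          ({x | |(fun i => (n.1 i : ℝ)) ⬝ᵥ x| ≤ c * ‖n.1‖ ^ (-τ)} ∩ closedBall 0 R) :=
        (measure_mono hcover).trans (measure_iUnion_le _)
    _ ≤ ∑' n : {n : ι → ℤ // n ≠ 0}, ENNReal.ofReal c * (2 * ENNReal.ofReal (2 * R) ^
          (Fintype.card ι - 1) * ENNReal.ofReal (‖n.1‖ ^ (-τ - 1))) :=
        ENNReal.tsum_le_tsum fun n =>
          volume_abs_intCast_dotProduct_le_inter_closedBall_le n.2 hc.le τ R
    _ ≤ ∑' n : ι → ℤ, ENNReal.ofReal c * (2 * ENNReal.ofReal (2 * R) ^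
          (Fintype.card ι - 1) * ENNReal.ofReal (‖n‖ ^ (-τ - 1))) :=
        ENNReal.tsum_comp_le_tsum_of_injective Subtype.val_injective _
    _ = _ := by rw [ENNReal.tsum_mul_left, ENNReal.tsum_mul_left]

lemma norm_le_normZ {m : ℕ} (n : Fin m → ℤ) : ‖n‖ ≤ normZ n := by
  refine pi_norm_le_iff_of_nonneg (Real.sqrt_nonneg _) |>.2 fun i => ?_
  rw [Int.norm_eq_abs, ← Real.sqrt_sq_eq_abs]
  exact Real.sqrt_le_sqrt (Finset.single_le_sum (fun j _ => sq_nonneg (n j : ℝ))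
    (Finset.mem_univ i))

/-- Diophantine vectors have full measure: for τ > m − 1, almost every ω ∈ ℝ^m admits a
constant C > 0 with |n·ω| ≥ C‖n‖^{−τ} for all nonzero integer vectors n. -/
theorem diophantine_full_measure
    (m : ℕ) (hm : 1 ≤ m) (τ : ℝ) (hτ : (m : ℝ) - 1 < τ) :
    ∀ᵐ ω : EuclideanSpace ℝ (Fin m) ∂volume,
      ∃ C : ℝ, 0 < C ∧ ∀ n : Fin m → ℤ, n ≠ 0 → C * normZ n ^ (-τ) ≤ |dotZ n ω| := by
  have hτ₀ : 0 ≤ τ := by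
    have : (1 : ℝ) ≤ m := by exact_mod_cast hm
    linarith
  have hcard : (Fintype.card (Fin m) : ℝ) < τ + 1 := by
    rw [Fintype.card_fin]
    linarith
  filter_upwards [(PiLp.volume_preserving_ofLp (Fin m)).quasiMeasurePreserving.ae
    (ae_exists_forall_le_abs_intCast_dotProduct hcard)] with ω ⟨C, hC, hω⟩
  refine ⟨C, hC, fun n hn => ?_⟩
  calc C * normZ n ^ (-τ) ≤ C * ‖n‖ ^ (-τ) :=
        mul_le_mul_of_nonneg_left (Real.rpow_le_rpow_of_nonpos (norm_pos_iff.2 hn)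
          (norm_le_normZ n) (neg_nonpos.2 hτ₀)) hC.le
    _ ≤ |dotZ n ω| := hω n hn
end

section
/- For every real number α, the improper Lebesgue integral ∫_{−∞}^{∞} (1 − cos(α z)) / z² dz equals π |α|. -/
/-!
Write `1 / z² = ∫₀^∞ t e^{-zt} dt` for `z > 0` and exchange the two integrals (Tonelli, the
integrand being nonnegative). The inner integral is a Laplace transform,
`∫₀^∞ e^{-tz} (1 - cos (a z)) dz = a² / (t (t² + a²))`, so the half-line integral becomes
`∫₀^∞ a² / (t² + a²) dt = π |a| / 2`; the integrand is even, which doubles this.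
-/

open MeasureTheory Set Real
open scoped ENNReal

lemma lintegral_ofReal_integral_comm {α β : Type*} [MeasurableSpace α] [MeasurableSpace β]
    {μ : Measure α} {ν : Measure β} [SFinite μ] [SFinite ν] {F : α → β → ℝ}
    (hF : AEMeasurable (Function.uncurry F) (μ.prod ν))
    (hFμ : ∀ᵐ x ∂μ, Integrable (F x) ν ∧ 0 ≤ᵐ[ν] F x)
    (hFν : ∀ᵐ y ∂ν, Integrable (F · y) μ ∧ 0 ≤ᵐ[μ] (F · y)) :
    ∫⁻ x, ENNReal.ofReal (∫ y, F x y ∂ν) ∂μ =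
      ∫⁻ y, ENNReal.ofReal (∫ x, F x y ∂μ) ∂ν :=
  calc ∫⁻ x, ENNReal.ofReal (∫ y, F x y ∂ν) ∂μ
      = ∫⁻ x, ∫⁻ y, ENNReal.ofReal (F x y) ∂ν ∂μ :=
        lintegral_congr_ae <| hFμ.mono fun _ hx =>
          ofReal_integral_eq_lintegral_ofReal hx.1 hx.2
    _ = ∫⁻ y, ∫⁻ x, ENNReal.ofReal (F x y) ∂μ ∂ν :=
        lintegral_lintegral_swap hF.ennreal_ofReal
    _ = ∫⁻ y, ENNReal.ofReal (∫ x, F x y ∂μ) ∂ν :=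
        lintegral_congr_ae <| hFν.mono fun _ hy =>
          (ofReal_integral_eq_lintegral_ofReal hy.1 hy.2).symm

lemma integral_eq_two_smul_setIntegral_Ioi_of_even {E : Type*} [NormedAddCommGroup E]
    [NormedSpace ℝ E] {f : ℝ → E} (hf : ∀ x, f (-x) = f x) (hfi : IntegrableOn f (Ioi 0)) :
    ∫ x, f x = (2 : ℝ) • ∫ x in Ioi 0, f x := by
  have hIic : IntegrableOn f (Iic 0) := by
    rw [integrableOn_Iic_iff_integrableOn_Iio]
    simpa [hf] using hfi.comp_neg
  have hIic_eq := integral_comp_neg_Ioi 0 f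
  simp only [neg_zero, hf] at hIic_eq
  rw [← intervalIntegral.integral_Iic_add_Ioi hIic hfi, ← hIic_eq, two_smul]

lemma integral_mul_exp_neg_mul_Ioi {z : ℝ} (hz : 0 < z) :
    ∫ t in Ioi 0, t * exp (-(z * t)) = 1 / z ^ 2 := by
  simpa [show (2 : ℝ) - 1 = 1 by norm_num] using integral_rpow_mul_exp_neg_mul_Ioi two_pos hz

lemma integral_exp_neg_mul_mul_one_sub_cos_Ioi {t : ℝ} (ht : 0 < t) (a : ℝ) :
    ∫ z in Ioi 0, exp (-(t * z)) * (1 - cos (a * z)) = a ^ 2 / (t * (t ^ 2 + a ^ 2)) := by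
  set c : ℂ := -t + a * Complex.I
  have hc : c.re < 0 := by simpa [c] using ht
  have hre (z : ℝ) : exp (-(t * z)) * (1 - cos (a * z)) =
      RCLike.re (Complex.exp (-t * z) - Complex.exp (c * z)) := by
    rw [mul_one_sub]
    simp [c, Complex.exp_re, add_mul, mul_comm (a : ℂ)]
  have h₁ := integrableOn_exp_mul_complex_Ioi (a := -t) (by simpa) 0
  have h₂ := integrableOn_exp_mul_complex_Ioi hc 0
  have h₁₂ : IntegrableOn (fun z : ℝ => Complex.exp (-t * z) - Complex.exp (c * z)) (Ioi 0) :=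
    h₁.sub h₂
  simp_rw [hre]
  rw [integral_re h₁₂, integral_sub h₁ h₂, integral_exp_mul_complex_Ioi (by simpa) 0,
    integral_exp_mul_complex_Ioi hc 0]
  have hval : t⁻¹ - t / (t ^ 2 + a ^ 2) = a ^ 2 / (t * (t ^ 2 + a ^ 2)) := by
    field_simp
    ring
  simpa [c, Complex.div_re, Complex.normSq, sq] using hval

lemma integral_sq_div_sq_add_sq_Ioi {a : ℝ} (ha : a ≠ 0) :
    ∫ t in Ioi 0, a ^ 2 / (t ^ 2 + a ^ 2) = π / 2 * |a| := by
  have h := integral_comp_mul_left_Ioi (fun s => (1 + s ^ 2)⁻¹) 0 (inv_pos.2 (abs_pos.2 ha))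
  have heq (t : ℝ) : (1 + (|a|⁻¹ * t) ^ 2)⁻¹ = a ^ 2 / (t ^ 2 + a ^ 2) := by
    field_simp
    rw [sq_abs]
    ring
  simp_rw [heq] at h
  rw [h, mul_zero, integral_Ioi_inv_one_add_sq, arctan_zero, inv_inv, smul_eq_mul]
  ring

lemma lintegral_one_sub_cos_div_sq_Ioi {a : ℝ} (ha : a ≠ 0) :
    ∫⁻ z in Ioi 0, ENNReal.ofReal ((1 - cos (a * z)) / z ^ 2) =
      ENNReal.ofReal (π / 2 * |a|) := by
  set K : ℝ → ℝ → ℝ := fun z t => (1 - cos (a * z)) * (t * exp (-(z * t)))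
  have hK_nonneg {z t : ℝ} (ht : 0 < t) : 0 ≤ K z t :=
    mul_nonneg (sub_nonneg.2 (cos_le_one _)) (by positivity)
  have hK_swap (z t : ℝ) : K z t = t * (exp (-(t * z)) * (1 - cos (a * z))) := by
    simp only [K, mul_comm z t]
    ring
  have hK_z {z : ℝ} (hz : 0 < z) : Integrable (K z) (volume.restrict (Ioi 0)) ∧
      ∫ t in Ioi 0, K z t = (1 - cos (a * z)) / z ^ 2 := by
    have hint : IntegrableOn (fun t => t * exp (-(z * t))) (Ioi 0) :=
      .of_integral_ne_zero <| by rw [integral_mul_exp_neg_mul_Ioi hz]; positivity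
    refine ⟨hint.const_mul _, ?_⟩
    rw [integral_const_mul, integral_mul_exp_neg_mul_Ioi hz, mul_one_div]
  have hK_t {t : ℝ} (ht : 0 < t) : Integrable (K · t) (volume.restrict (Ioi 0)) ∧
      ∫ z in Ioi 0, K z t = a ^ 2 / (t ^ 2 + a ^ 2) := by
    have hint : IntegrableOn (fun z => exp (-(t * z)) * (1 - cos (a * z))) (Ioi 0) :=
      .of_integral_ne_zero <| by
        rw [integral_exp_neg_mul_mul_one_sub_cos_Ioi ht]; positivity
    simp_rw [hK_swap]
    refine ⟨hint.const_mul t, ?_⟩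
    rw [integral_const_mul, integral_exp_neg_mul_mul_one_sub_cos_Ioi ht]
    field_simp
  have hpos : ∀ᵐ x ∂(volume.restrict (Ioi (0 : ℝ))), 0 < x :=
    ae_restrict_mem measurableSet_Ioi
  calc ∫⁻ z in Ioi 0, ENNReal.ofReal ((1 - cos (a * z)) / z ^ 2)
      = ∫⁻ z in Ioi 0, ENNReal.ofReal (∫ t in Ioi 0, K z t) :=
        setLIntegral_congr_fun measurableSet_Ioi fun z hz => by rw [(hK_z hz).2]
    _ = ∫⁻ t in Ioi 0, ENNReal.ofReal (∫ z in Ioi 0, K z t) :=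
        lintegral_ofReal_integral_comm (by fun_prop)
          (hpos.mono fun z hz => ⟨(hK_z hz).1, hpos.mono fun t ht => hK_nonneg ht⟩)
          (hpos.mono fun t ht => ⟨(hK_t ht).1, .of_forall fun z => hK_nonneg ht⟩)
    _ = ∫⁻ t in Ioi 0, ENNReal.ofReal (a ^ 2 / (t ^ 2 + a ^ 2)) :=
        setLIntegral_congr_fun measurableSet_Ioi fun t ht => by rw [(hK_t ht).2]
    _ = ENNReal.ofReal (π / 2 * |a|) := by
        rw [← integral_sq_div_sq_add_sq_Ioi ha, ofReal_integral_eq_lintegral_ofReal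
          (.of_integral_ne_zero (by rw [integral_sq_div_sq_add_sq_Ioi ha]; positivity))
          (.of_forall fun t => by positivity)]

lemma integral_one_sub_cos_div_sq_Ioi {a : ℝ} (ha : a ≠ 0) :
    ∫ z in Ioi 0, (1 - cos (a * z)) / z ^ 2 = π / 2 * |a| := by
  have hmeas : Measurable fun z : ℝ => (1 - cos (a * z)) / z ^ 2 := by fun_prop
  rw [integral_eq_lintegral_of_nonneg_ae
      (.of_forall fun z => div_nonneg (sub_nonneg.2 (cos_le_one _)) (sq_nonneg z))
      hmeas.aestronglyMeasurable,
    lintegral_one_sub_cos_div_sq_Ioi ha, ENNReal.toReal_ofReal (by positivity)]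

/-- `∫_{−∞}^{∞} (1 − cos(αz))/z² dz = π|α|`, the integrand being extended continuously by
`α²/2` at `z = 0`. -/
theorem integral_one_sub_cos_div_sq (α : ℝ) :
    ∫ z : ℝ, (if z = 0 then α ^ 2 / 2 else (1 - Real.cos (α * z)) / z ^ 2) =
      Real.pi * |α| := by
  rcases eq_or_ne α 0 with rfl | hα
  · simp
  have hae : (fun z : ℝ => if z = 0 then α ^ 2 / 2 else (1 - cos (α * z)) / z ^ 2)
      =ᵐ[volume] fun z => (1 - cos (α * z)) / z ^ 2 :=
    (Measure.ae_ne volume 0).mono fun z hz => if_neg hz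
  have hInt : IntegrableOn (fun z => (1 - cos (α * z)) / z ^ 2) (Ioi 0) :=
    .of_integral_ne_zero <| by rw [integral_one_sub_cos_div_sq_Ioi hα]; positivity
  rw [integral_congr_ae hae,
    integral_eq_two_smul_setIntegral_Ioi_of_even (fun z => by simp) hInt,
    integral_one_sub_cos_div_sq_Ioi hα, smul_eq_mul]
  ring
end

section
/- The improper Lebesgue integral ∫_{−∞}^{∞} (z − sin z) / z³ dz equals π/2. -/
/-!
For `x > 0` we have `2 / x³ = ∫₀^∞ t² e^{-xt} dt`, while the Laplace transform of `x - sin x`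
is `1/t² - 1/(1 + t²)`. Since `x - sin x ≥ 0` on `(0, ∞)`, Tonelli lets us exchange the two
integrations, so `∫₀^∞ (x - sin x)/x³ dx = ½ ∫₀^∞ dt/(1 + t²) = π/4`; the integrand is even.
-/

open MeasureTheory Real Set Function
open scoped Nat

section Swap

variable {α β : Type*} [MeasurableSpace α] [MeasurableSpace β] {μ : Measure α} {ν : Measure β}
  [SFinite ν] {F : α → β → ℝ}

theorem integral_integral_eq_toReal_lintegral_lintegral
    (hF : AEStronglyMeasurable (uncurry F) (μ.prod ν)) (hF_nonneg : ∀ᵐ x ∂μ, ∀ᵐ y ∂ν, 0 ≤ F x y)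
    (hF_int : ∀ᵐ x ∂μ, Integrable (F x) ν) :
    ∫ x, ∫ y, F x y ∂ν ∂μ = (∫⁻ x, ∫⁻ y, ENNReal.ofReal (F x y) ∂ν ∂μ).toReal := by
  have h_nonneg : 0 ≤ᵐ[μ] fun x ↦ ∫ y, F x y ∂ν :=
    hF_nonneg.mono fun x hx ↦ integral_nonneg_of_ae hx
  rw [integral_eq_lintegral_of_nonneg_ae h_nonneg hF.integral_prod_right']
  congr 1
  refine lintegral_congr_ae ?_
  filter_upwards [hF_nonneg, hF_int] with x hx hix
  exact ofReal_integral_eq_lintegral_ofReal hix hx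

theorem integral_integral_swap_of_nonneg [SFinite μ]
    (hF : AEStronglyMeasurable (uncurry F) (μ.prod ν)) (hF_nonneg : 0 ≤ᵐ[μ.prod ν] uncurry F)
    (hF_int_left : ∀ᵐ x ∂μ, Integrable (F x) ν)
    (hF_int_right : ∀ᵐ y ∂ν, Integrable (fun x ↦ F x y) μ) :
    ∫ x, ∫ y, F x y ∂ν ∂μ = ∫ y, ∫ x, F x y ∂μ ∂ν := by
  have h_swap := (Measure.measurePreserving_swap (μ := ν) (ν := μ)).quasiMeasurePreserving
  rw [integral_integral_eq_toReal_lintegral_lintegral hF (Measure.ae_ae_of_ae_prod hF_nonneg)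
      hF_int_left,
    integral_integral_eq_toReal_lintegral_lintegral (F := fun y x ↦ F x y) hF.prod_swap
      (Measure.ae_ae_of_ae_prod (h_swap.ae hF_nonneg)) hF_int_right,
    lintegral_lintegral_swap hF.aemeasurable.ennreal_ofReal]

end Swap

theorem sin_mul_exp_neg_mul_eq_im (t x : ℝ) :
    sin x * exp (-(t * x)) = (Complex.exp ((-t + Complex.I) * x)).im := by
  simp [Complex.exp_im, mul_comm]

section Laplace

variable {t : ℝ}

theorem integral_pow_mul_exp_neg_mul_Ioi (n : ℕ) (ht : 0 < t) :
    ∫ x in Ioi (0 : ℝ), x ^ n * exp (-(t * x)) = n ! / t ^ (n + 1) := by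
  have h := integral_rpow_mul_exp_neg_mul_Ioi (a := n + 1) (by positivity) ht
  rw [Gamma_nat_eq_factorial, add_sub_cancel_right, ← Nat.cast_add_one, rpow_natCast,
    div_pow, one_pow, one_div_mul_eq_div] at h
  simpa only [rpow_natCast] using h

theorem integrableOn_pow_mul_exp_neg_mul_Ioi (n : ℕ) (ht : 0 < t) :
    IntegrableOn (fun x : ℝ ↦ x ^ n * exp (-(t * x))) (Ioi 0) :=
  Integrable.of_integral_ne_zero <| by
    rw [integral_pow_mul_exp_neg_mul_Ioi n ht]; positivity

theorem integrableOn_sin_mul_exp_neg_mul_Ioi (ht : 0 < t) :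
    IntegrableOn (fun x : ℝ ↦ sin x * exp (-(t * x))) (Ioi 0) := by
  simp only [sin_mul_exp_neg_mul_eq_im t]
  exact (integrableOn_exp_mul_complex_Ioi (by simpa using ht) 0).im

theorem integral_sin_mul_exp_neg_mul_Ioi (ht : 0 < t) :
    ∫ x in Ioi (0 : ℝ), sin x * exp (-(t * x)) = 1 / (1 + t ^ 2) := by
  simp only [sin_mul_exp_neg_mul_eq_im t, ← RCLike.im_to_complex]
  rw [integral_im (integrableOn_exp_mul_complex_Ioi (by simpa using ht) 0),
    integral_exp_mul_complex_Ioi (by simpa using ht) 0]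
  have h_normSq : Complex.normSq (-t + Complex.I) = 1 + t ^ 2 := by
    simp [Complex.normSq_apply]; ring
  simp [h_normSq, neg_div]

theorem integral_sub_sin_mul_exp_neg_mul_Ioi (ht : 0 < t) :
    ∫ x in Ioi (0 : ℝ), (x - sin x) * exp (-(t * x)) = 1 / (t ^ 2 * (1 + t ^ 2)) := by
  have h_id := integrableOn_pow_mul_exp_neg_mul_Ioi 1 ht
  have h_id_integral := integral_pow_mul_exp_neg_mul_Ioi 1 ht
  simp only [pow_one] at h_id h_id_integral
  simp only [sub_mul]
  rw [integral_sub h_id (integrableOn_sin_mul_exp_neg_mul_Ioi ht), h_id_integral,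
    integral_sin_mul_exp_neg_mul_Ioi ht]
  field_simp
  ring

end Laplace

theorem integral_Ioi_sub_sin_div_cube : ∫ x in Ioi (0 : ℝ), (x - sin x) / x ^ 3 = π / 4 := by
  set F : ℝ → ℝ → ℝ := fun x t ↦ (x - sin x) * (t ^ 2 * exp (-(x * t)))
  have h_inner_t : ∀ x ∈ Ioi (0 : ℝ), ∫ t in Ioi (0 : ℝ), F x t = 2 * ((x - sin x) / x ^ 3) := by
    intro x hx
    rw [integral_const_mul, integral_pow_mul_exp_neg_mul_Ioi 2 hx]
    norm_num
    ring
  have h_inner_x : ∀ t ∈ Ioi (0 : ℝ), ∫ x in Ioi (0 : ℝ), F x t = (1 + t ^ 2)⁻¹ := by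
    intro t (ht : 0 < t)
    simp only [F, mul_comm _ t, mul_left_comm _ (t ^ 2)]
    rw [integral_const_mul, integral_sub_sin_mul_exp_neg_mul_Ioi ht]
    field_simp
  have h_swap : ∫ x in Ioi (0 : ℝ), ∫ t in Ioi (0 : ℝ), F x t
      = ∫ t in Ioi (0 : ℝ), ∫ x in Ioi (0 : ℝ), F x t := by
    refine integral_integral_swap_of_nonneg
      (Continuous.aestronglyMeasurable (by fun_prop)) ?_ ?_ ?_
    · rw [Measure.prod_restrict]
      refine ae_restrict_of_forall_mem (measurableSet_Ioi.prod measurableSet_Ioi) ?_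
      rintro ⟨x, t⟩ ⟨hx, -⟩
      exact mul_nonneg (sub_nonneg.2 (sin_le (le_of_lt hx))) (by positivity)
    · refine ae_restrict_of_forall_mem measurableSet_Ioi fun x hx ↦ ?_
      exact (integrableOn_pow_mul_exp_neg_mul_Ioi 2 hx).const_mul _
    · refine ae_restrict_of_forall_mem measurableSet_Ioi fun t ht ↦ ?_
      exact Integrable.of_integral_ne_zero (by rw [h_inner_x t ht]; positivity)
  calc ∫ x in Ioi (0 : ℝ), (x - sin x) / x ^ 3
      = 2⁻¹ * ∫ x in Ioi (0 : ℝ), ∫ t in Ioi (0 : ℝ), F x t := by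
        rw [setIntegral_congr_fun measurableSet_Ioi h_inner_t, integral_const_mul,
          inv_mul_cancel_left₀ two_ne_zero]
    _ = 2⁻¹ * ∫ t in Ioi (0 : ℝ), (1 + t ^ 2)⁻¹ := by
        rw [h_swap, setIntegral_congr_fun measurableSet_Ioi h_inner_x]
    _ = π / 4 := by
        rw [integral_Ioi_inv_one_add_sq, arctan_zero]
        ring

/-- `∫_{−∞}^{∞} (z − sin z)/z³ dz = π/2`, the integrand being extended continuously by `1/6`
at `z = 0`. -/
theorem integral_sub_sin_div_cube :
    ∫ z : ℝ, (if z = 0 then (1 : ℝ) / 6 else (z - Real.sin z) / z ^ 3) = Real.pi / 2 := by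
  set g : ℝ → ℝ := fun z ↦ if z = 0 then 1 / 6 else (z - sin z) / z ^ 3 with hg
  have h_even : ∀ z, g |z| = g z := by
    intro z
    rcases abs_choice z with h | h <;> rw [h]
    simp only [hg, neg_eq_zero, sin_neg]
    split_ifs <;> ring
  calc ∫ z, g z = ∫ z, g |z| := by simp only [h_even]
    _ = 2 * ∫ z in Ioi 0, g z := integral_comp_abs
    _ = 2 * ∫ z in Ioi 0, (z - sin z) / z ^ 3 :=
        congrArg _ (setIntegral_congr_fun measurableSet_Ioi fun z hz ↦ if_neg hz.ne')
    _ = π / 2 := by rw [integral_Ioi_sub_sin_div_cube]; ring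
end

section
/- For all real numbers a₁, a₂, the integral ∫_{−∞}^{∞} (e^{i a₁ z} − 1)(e^{−i a₂ z} − 1) / z² dz converges and equals π ( |a₁| + |a₂| − |a₁ − a₂| ). -/
/-!
The integrand at `-z` is the complex conjugate of the integrand at `z`, so the integral is real,
and its real part is `F a₁ + F a₂ - F (a₁ - a₂)` with `F a z = (1 - cos (a z)) / z²`.
By scaling, `∫ F a = π |a|` reduces to `∫ (1 - cos x) / x² = π`, which follows from Tonelli:
`1 / x² = ∫₀^∞ t e^{-x t} dt` and `∫₀^∞ (1 - cos x) e^{-t x} dx = 1 / (t (1 + t²))`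
(the real part of a complex exponential integral) leave `∫₀^∞ dt / (1 + t²) = π / 2`.
-/

open MeasureTheory Set Real

lemma one_sub_cos_mul_div_sq_le (a x : ℝ) :
    (1 - cos (a * x)) / x ^ 2 ≤ (a ^ 2 / 2 + 2) * (1 + x ^ 2)⁻¹ := by
  rcases eq_or_ne x 0 with rfl | hx
  · rw [zero_pow two_ne_zero, div_zero]
    positivity
  have h₁ : 1 - cos (a * x) ≤ (a * x) ^ 2 / 2 := by
    linarith [one_sub_sq_div_two_le_cos (x := a * x)]
  have h₂ : 1 - cos (a * x) ≤ 2 := by linarith [neg_one_le_cos (a * x)]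
  rw [div_le_iff₀ (by positivity), ← div_eq_mul_inv, div_mul_eq_mul_div,
    le_div_iff₀ (by positivity)]
  nlinarith

lemma integrable_one_sub_cos_mul_div_sq (a : ℝ) :
    Integrable fun x : ℝ => (1 - cos (a * x)) / x ^ 2 := by
  refine (integrable_inv_one_add_sq.const_mul (a ^ 2 / 2 + 2)).mono'
    (by fun_prop : Measurable _).aestronglyMeasurable (ae_of_all _ fun x => ?_)
  rw [Real.norm_of_nonneg (div_nonneg (sub_nonneg.2 (cos_le_one _)) (sq_nonneg x))]
  exact one_sub_cos_mul_div_sq_le a x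

lemma integral_Ioi_mul_exp_neg_mul {x : ℝ} (hx : 0 < x) :
    ∫ t in Ioi 0, t * exp (-(x * t)) = (x ^ 2)⁻¹ := by
  have h := integral_rpow_mul_exp_neg_mul_Ioi two_pos hx
  rw [show (2 : ℝ) - 1 = 1 by norm_num, Gamma_two, mul_one, one_div] at h
  simpa only [rpow_one, rpow_two, inv_pow] using h

lemma integral_Ioi_one_sub_cos_mul_exp_neg_mul {t : ℝ} (ht : 0 < t) :
    ∫ x in Ioi 0, (1 - cos x) * exp (-(t * x)) = (t * (1 + t ^ 2))⁻¹ := by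
  have h₁ := integrableOn_exp_mul_complex_Ioi (a := -t) (by simpa using ht) 0
  have h₂ := integrableOn_exp_mul_complex_Ioi (a := -t + Complex.I) (by simpa using ht) 0
  have h_re : ∀ x : ℝ, (1 - cos x) * exp (-(t * x)) =
      RCLike.re (Complex.exp (-t * x) - Complex.exp ((-t + Complex.I) * x)) := fun x => by
    simp only [RCLike.re_to_complex, Complex.sub_re, Complex.exp_re, Complex.mul_re,
      Complex.mul_im, Complex.add_re, Complex.add_im, Complex.neg_re, Complex.neg_im,
      Complex.ofReal_re, Complex.ofReal_im, Complex.I_re, Complex.I_im, mul_zero, zero_mul,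
      sub_zero, add_zero, zero_add, neg_zero, mul_one, one_mul, cos_zero, neg_mul]
    ring
  have h_value : -Complex.exp (-t * (0 : ℝ)) / -t - -Complex.exp ((-t + Complex.I) * (0 : ℝ)) /
      (-t + Complex.I) = ((t * (1 + t ^ 2))⁻¹ : ℝ) - Complex.I * ((1 + t ^ 2)⁻¹ : ℝ) := by
    have ht' : (t : ℂ) ≠ 0 := by exact_mod_cast ht.ne'
    have hI : -(t : ℂ) + Complex.I ≠ 0 := fun h => by simpa using congrArg Complex.im h
    have hsq : 1 + (t : ℂ) ^ 2 ≠ 0 := by exact_mod_cast (by positivity : 1 + t ^ 2 ≠ 0)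
    push_cast
    simp only [mul_zero, Complex.exp_zero]
    field_simp
    ring_nf
    rw [Complex.I_sq]
    ring
  simp_rw [h_re]
  rw [integral_re (h₁.fun_sub h₂), integral_sub h₁ h₂,
    integral_exp_mul_complex_Ioi (by simpa using ht),
    integral_exp_mul_complex_Ioi (by simpa using ht),
    h_value, RCLike.re_to_complex, Complex.sub_re, Complex.re_mul_ofReal, Complex.ofReal_re,
    Complex.I_re, zero_mul, sub_zero]

lemma lintegral_ofReal_eq_ofReal_integral_of_ne_zero {α : Type*} [MeasurableSpace α]
    {μ : Measure α} {f : α → ℝ} (hf : 0 ≤ᵐ[μ] f) (h : ∫ x, f x ∂μ ≠ 0) :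
    ∫⁻ x, ENNReal.ofReal (f x) ∂μ = ENNReal.ofReal (∫ x, f x ∂μ) :=
  (ofReal_integral_eq_lintegral_ofReal (.of_integral_ne_zero h) hf).symm

lemma lintegral_Ioi_inv_one_add_sq :
    ∫⁻ t in Ioi (0 : ℝ), ENNReal.ofReal (1 + t ^ 2)⁻¹ = ENNReal.ofReal (π / 2) := by
  have h : ∫ t in Ioi (0 : ℝ), (1 + t ^ 2)⁻¹ = π / 2 := by
    rw [integral_Ioi_inv_one_add_sq, arctan_zero, sub_zero]
  rw [lintegral_ofReal_eq_ofReal_integral_of_ne_zero (ae_of_all _ fun t => by positivity)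
    (by rw [h]; positivity), h]

theorem integral_Ioi_one_sub_cos_div_sq : ∫ x in Ioi 0, (1 - cos x) / x ^ 2 = π / 2 := by
  set k : ℝ → ℝ → ℝ := fun x t => (1 - cos x) * (t * exp (-(x * t))) with hk
  have inner_t : ∀ x ∈ Ioi (0 : ℝ), ∫⁻ t in Ioi 0, ENNReal.ofReal (k x t) =
      ENNReal.ofReal ((1 - cos x) / x ^ 2) := by
    intro x (hx : 0 < x)
    simp_rw [hk, ENNReal.ofReal_mul (sub_nonneg.2 (cos_le_one x))]
    rw [lintegral_const_mul' _ _ ENNReal.ofReal_ne_top,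
      lintegral_ofReal_eq_ofReal_integral_of_ne_zero, integral_Ioi_mul_exp_neg_mul hx,
      ← ENNReal.ofReal_mul (sub_nonneg.2 (cos_le_one x)), div_eq_mul_inv]
    · exact ae_restrict_of_forall_mem measurableSet_Ioi fun t ht =>
        mul_nonneg (le_of_lt ht) (exp_nonneg _)
    · rw [integral_Ioi_mul_exp_neg_mul hx]; positivity
  have inner_x : ∀ t ∈ Ioi (0 : ℝ), ∫⁻ x in Ioi 0, ENNReal.ofReal (k x t) =
      ENNReal.ofReal (1 + t ^ 2)⁻¹ := by
    intro t (ht : 0 < t)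
    have hk_comm : ∀ x, k x t = t * ((1 - cos x) * exp (-(t * x))) := fun x => by
      rw [hk]; ring_nf
    simp_rw [hk_comm, ENNReal.ofReal_mul (le_of_lt ht)]
    rw [lintegral_const_mul' _ _ ENNReal.ofReal_ne_top,
      lintegral_ofReal_eq_ofReal_integral_of_ne_zero, integral_Ioi_one_sub_cos_mul_exp_neg_mul ht,
      ← ENNReal.ofReal_mul (le_of_lt ht)]
    · congr 1; field_simp
    · exact ae_of_all _ fun x => mul_nonneg (sub_nonneg.2 (cos_le_one x)) (exp_nonneg _)
    · rw [integral_Ioi_one_sub_cos_mul_exp_neg_mul ht]; positivity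
  have hk_meas : AEMeasurable (Function.uncurry fun x t => ENNReal.ofReal (k x t))
      ((volume.restrict (Ioi 0)).prod (volume.restrict (Ioi 0))) := by
    have : Continuous (Function.uncurry k) := by rw [hk]; fun_prop
    exact this.measurable.ennreal_ofReal.aemeasurable
  have h_lintegral :
      ∫⁻ x in Ioi 0, ENNReal.ofReal ((1 - cos x) / x ^ 2) = ENNReal.ofReal (π / 2) :=
    calc ∫⁻ x in Ioi 0, ENNReal.ofReal ((1 - cos x) / x ^ 2)
        = ∫⁻ x in Ioi 0, ∫⁻ t in Ioi 0, ENNReal.ofReal (k x t) :=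
          (setLIntegral_congr_fun measurableSet_Ioi inner_t).symm
      _ = ∫⁻ t in Ioi 0, ∫⁻ x in Ioi 0, ENNReal.ofReal (k x t) :=
          lintegral_lintegral_swap hk_meas
      _ = ∫⁻ t in Ioi 0, ENNReal.ofReal (1 + t ^ 2)⁻¹ :=
          setLIntegral_congr_fun measurableSet_Ioi inner_x
      _ = ENNReal.ofReal (π / 2) := lintegral_Ioi_inv_one_add_sq
  have h_nonneg : ∀ x : ℝ, 0 ≤ (1 - cos x) / x ^ 2 := fun x =>
    div_nonneg (sub_nonneg.2 (cos_le_one x)) (sq_nonneg x)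
  have h_int : Integrable fun x : ℝ => (1 - cos x) / x ^ 2 := by
    simpa only [one_mul] using integrable_one_sub_cos_mul_div_sq 1
  rwa [← ofReal_integral_eq_lintegral_ofReal h_int.integrableOn (ae_of_all _ h_nonneg),
    ENNReal.ofReal_eq_ofReal_iff (setIntegral_nonneg measurableSet_Ioi fun x _ => h_nonneg x)
      (by positivity)] at h_lintegral

theorem integral_one_sub_cos_div_sq_s13 : ∫ x, (1 - cos x) / x ^ 2 = π := by
  have h_even := integral_comp_abs (f := fun x => (1 - cos x) / x ^ 2)
  simp only [cos_abs, sq_abs] at h_even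
  rw [h_even, integral_Ioi_one_sub_cos_div_sq]
  ring

theorem integral_one_sub_cos_mul_div_sq (a : ℝ) :
    ∫ x, (1 - cos (a * x)) / x ^ 2 = π * |a| := by
  rcases eq_or_ne a 0 with rfl | ha
  · simp
  have h_scale : ∀ x, (1 - cos (a * x)) / x ^ 2 = a ^ 2 * ((1 - cos (a * x)) / (a * x) ^ 2) := by
    intro x
    rcases eq_or_ne x 0 with rfl | hx
    · simp
    · field_simp
  simp_rw [h_scale]
  rw [integral_const_mul, Measure.integral_comp_mul_left (fun y => (1 - cos y) / y ^ 2) a,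
    integral_one_sub_cos_div_sq_s13, smul_eq_mul, abs_inv, ← sq_abs]
  field_simp

lemma norm_exp_I_mul_ofReal_sub_one_sq (θ : ℝ) :
    ‖Complex.exp (Complex.I * θ) - 1‖ ^ 2 = 2 * (1 - cos θ) := by
  rw [Complex.norm_exp_I_mul_ofReal_sub_one, Real.norm_eq_abs, sq_abs, mul_pow, sin_sq, cos_sq,
    mul_div_cancel₀ θ two_ne_zero]
  ring

lemma re_exp_sub_one_mul_exp_sub_one (α β : ℝ) :
    ((Complex.exp (Complex.I * α) - 1) * (Complex.exp (-Complex.I * β) - 1)).re =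
      (1 - cos α) + (1 - cos β) - (1 - cos (α - β)) := by
  simp only [neg_mul, Complex.mul_re, Complex.sub_re, Complex.exp_re, Complex.I_re,
    Complex.ofReal_re, zero_mul, Complex.I_im, Complex.ofReal_im, mul_zero, sub_self, exp_zero,
    Complex.mul_im, one_mul, zero_add, Complex.one_re, Complex.neg_re, neg_zero, Complex.neg_im,
    cos_neg, Complex.sub_im, Complex.exp_im, Complex.one_im, sub_zero, sin_neg, mul_neg,
    sub_neg_eq_add, cos_sub]
  ring

lemma norm_exp_sub_one_mul_exp_sub_one_le (α β : ℝ) :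
    ‖(Complex.exp (Complex.I * α) - 1) * (Complex.exp (-Complex.I * β) - 1)‖ ≤
      (1 - cos α) + (1 - cos β) := by
  have hβ : -Complex.I * β = Complex.I * ((-β : ℝ) : ℂ) := by push_cast; ring
  have h₁ := norm_exp_I_mul_ofReal_sub_one_sq α
  have h₂ := norm_exp_I_mul_ofReal_sub_one_sq (-β)
  rw [cos_neg] at h₂
  rw [norm_mul, hβ]
  nlinarith [two_mul_le_add_sq ‖Complex.exp (Complex.I * α) - 1‖
    ‖Complex.exp (Complex.I * ((-β : ℝ) : ℂ)) - 1‖]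

lemma exp_sub_one_mul_exp_sub_one_div_sq_neg (a₁ a₂ z : ℝ) :
    (Complex.exp (Complex.I * a₁ * (-z : ℝ)) - 1) *
        (Complex.exp (-Complex.I * a₂ * (-z : ℝ)) - 1) / ((-z : ℝ) : ℂ) ^ 2 =
      starRingEnd ℂ ((Complex.exp (Complex.I * a₁ * z) - 1) *
        (Complex.exp (-Complex.I * a₂ * z) - 1) / (z : ℂ) ^ 2) := by
  simp [← Complex.exp_conj]

section
variable (a₁ a₂ : ℝ)

lemma exp_sub_one_mul_exp_sub_one_div_sq_eq_ofReal (z : ℝ) :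
    (Complex.exp (Complex.I * a₁ * z) - 1) * (Complex.exp (-Complex.I * a₂ * z) - 1) /
        (z : ℂ) ^ 2 =
      (Complex.exp (Complex.I * ↑(a₁ * z)) - 1) *
        (Complex.exp (-Complex.I * ↑(a₂ * z)) - 1) / ↑(z ^ 2) := by
  push_cast; ring_nf

lemma integrable_exp_sub_one_mul_exp_sub_one_div_sq :
    Integrable fun z : ℝ =>
      (Complex.exp (Complex.I * a₁ * z) - 1) * (Complex.exp (-Complex.I * a₂ * z) - 1) /
        (z : ℂ) ^ 2 := by
  refine ((integrable_one_sub_cos_mul_div_sq a₁).add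
    (integrable_one_sub_cos_mul_div_sq a₂)).mono'
    (by fun_prop : Measurable _).aestronglyMeasurable (ae_of_all _ fun z => ?_)
  rw [Pi.add_apply, exp_sub_one_mul_exp_sub_one_div_sq_eq_ofReal, norm_div, Complex.norm_real,
    Real.norm_of_nonneg (sq_nonneg z), ← add_div]
  exact div_le_div_of_nonneg_right (norm_exp_sub_one_mul_exp_sub_one_le _ _) (sq_nonneg z)

lemma re_exp_sub_one_mul_exp_sub_one_div_sq (z : ℝ) :
    ((Complex.exp (Complex.I * a₁ * z) - 1) * (Complex.exp (-Complex.I * a₂ * z) - 1) /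
        (z : ℂ) ^ 2).re =
      (1 - cos (a₁ * z)) / z ^ 2 + (1 - cos (a₂ * z)) / z ^ 2 -
        (1 - cos ((a₁ - a₂) * z)) / z ^ 2 := by
  rw [exp_sub_one_mul_exp_sub_one_div_sq_eq_ofReal, Complex.div_ofReal_re,
    re_exp_sub_one_mul_exp_sub_one, sub_mul]
  ring

theorem integral_exp_sub_one_mul_exp_sub_one_div_sq :
    ∫ z : ℝ,
      (Complex.exp (Complex.I * a₁ * z) - 1) * (Complex.exp (-Complex.I * a₂ * z) - 1) /
        (z : ℂ) ^ 2 = ((π * (|a₁| + |a₂| - |a₁ - a₂|) : ℝ) : ℂ) := by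
  set L := ∫ z : ℝ,
    (Complex.exp (Complex.I * a₁ * z) - 1) * (Complex.exp (-Complex.I * a₂ * z) - 1) /
      (z : ℂ) ^ 2 with hL
  have h_int := integrable_exp_sub_one_mul_exp_sub_one_div_sq a₁ a₂
  have h_conj : starRingEnd ℂ L = L := by
    rw [hL, ← integral_conj, ← integral_neg_eq_self]
    simp_rw [exp_sub_one_mul_exp_sub_one_div_sq_neg, Complex.conj_conj]
  have h_re : L.re = π * (|a₁| + |a₂| - |a₁ - a₂|) := by
    rw [hL, ← RCLike.re_to_complex, ← integral_re h_int]
    simp_rw [RCLike.re_to_complex, re_exp_sub_one_mul_exp_sub_one_div_sq]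
    rw [integral_sub _ (integrable_one_sub_cos_mul_div_sq _), integral_add
      (integrable_one_sub_cos_mul_div_sq _) (integrable_one_sub_cos_mul_div_sq _),
      integral_one_sub_cos_mul_div_sq, integral_one_sub_cos_mul_div_sq,
      integral_one_sub_cos_mul_div_sq]
    · ring
    · exact (integrable_one_sub_cos_mul_div_sq _).add (integrable_one_sub_cos_mul_div_sq _)
  rw [← Complex.conj_eq_iff_re.mp h_conj, h_re]

end

/-- `∫_{−∞}^{∞} (e^{ia₁z} − 1)(e^{−ia₂z} − 1)/z² dz` converges and equals
`π(|a₁| + |a₂| − |a₁ − a₂|)`; the integrand is extended continuously by `a₁a₂` at `z = 0`. -/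
theorem integral_exp_prod_div_sq (a₁ a₂ : ℝ) :
    Integrable (fun z : ℝ => if z = 0 then ((a₁ * a₂ : ℝ) : ℂ)
      else (Complex.exp (Complex.I * a₁ * z) - 1) * (Complex.exp (-Complex.I * a₂ * z) - 1) /
        (z : ℂ) ^ 2) ∧
    ∫ z : ℝ, (if z = 0 then ((a₁ * a₂ : ℝ) : ℂ)
      else (Complex.exp (Complex.I * a₁ * z) - 1) * (Complex.exp (-Complex.I * a₂ * z) - 1) /
        (z : ℂ) ^ 2) =
      ((Real.pi * (|a₁| + |a₂| - |a₁ - a₂|) : ℝ) : ℂ) := by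
  have h_ae : (fun z : ℝ => if z = 0 then ((a₁ * a₂ : ℝ) : ℂ)
      else (Complex.exp (Complex.I * a₁ * z) - 1) * (Complex.exp (-Complex.I * a₂ * z) - 1) /
        (z : ℂ) ^ 2) =ᵐ[volume] fun z : ℝ =>
      (Complex.exp (Complex.I * a₁ * z) - 1) * (Complex.exp (-Complex.I * a₂ * z) - 1) /
        (z : ℂ) ^ 2 := by
    filter_upwards [volume.ae_ne 0] with z hz using if_neg hz
  exact ⟨(integrable_exp_sub_one_mul_exp_sub_one_div_sq a₁ a₂).congr h_ae.symm,
    (integral_congr_ae h_ae).trans (integral_exp_sub_one_mul_exp_sub_one_div_sq a₁ a₂)⟩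
end

section
/- For all real numbers a₁, a₂, the integral M(a₁, a₂) = ∫_{−∞}^{∞} (e^{i a₁ z} − 1 − i a₁ z)(e^{−i a₂ z} − 1 + i a₂ z) / z⁴ dz converges and equals (π/6) [ (3a₂ − a₁) a₁ |a₁| + (3a₁ − a₂) a₂ |a₂| + (a₁ − a₂)² |a₁ − a₂| ]. In particular M(1,1) = 2π/3. -/
/-!
Taylor's formula with integral remainder gives `e^{iaz} - 1 - iaz = -z² ∫ k_a(t) e^{itz} dt`
with the kernel `k_a(t) = |a - t|` on `[0, a]`. Hence the integrand is the product of the Fourier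
transforms of `k_{a₁}` and `k_{-a₂}`, i.e. the Fourier transform of their convolution `h`. This
`h` is continuous and the integrand is `O(1/z²)`, so Fourier inversion at `0` gives
`M(a₁, a₂) = 2π h(0) = 2π ∫ k_{a₁} k_{a₂}`: the integral of a quadratic polynomial over
`[0, a₁] ∩ [0, a₂]` when `a₁, a₂` have the same sign, and `0` otherwise.
-/

open MeasureTheory Set Topology Complex Real
open scoped Convolution FourierTransform

noncomputable def taylorKernel (a : ℝ) : ℝ → ℝ := (uIcc 0 a).indicator fun t => |a - t|

section TaylorKernel

variable (a : ℝ)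

theorem taylorKernel_nonneg (t : ℝ) : 0 ≤ taylorKernel a t :=
  indicator_nonneg (fun _ _ => abs_nonneg _) t

theorem taylorKernel_le_abs (t : ℝ) : taylorKernel a t ≤ |a| := by
  unfold taylorKernel
  by_cases ht : t ∈ uIcc 0 a
  · simpa [indicator_of_mem ht] using abs_sub_right_of_mem_uIcc ht
  · simp [indicator_of_notMem ht]

theorem taylorKernel_neg (t : ℝ) : taylorKernel (-a) (-t) = taylorKernel a t := by
  have hmem : -t ∈ uIcc 0 (-a) ↔ t ∈ uIcc 0 a := by
    simp only [mem_uIcc, neg_nonneg, neg_le_neg_iff, neg_nonpos]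
    tauto
  unfold taylorKernel
  by_cases ht : t ∈ uIcc 0 a
  · rw [indicator_of_mem (hmem.2 ht), indicator_of_mem ht, sub_neg_eq_add, neg_add_eq_sub,
      abs_sub_comm]
  · rw [indicator_of_notMem (mt hmem.1 ht), indicator_of_notMem ht]

theorem integrable_taylorKernel : Integrable (taylorKernel a) :=
  (integrable_indicator_iff measurableSet_uIcc).2 (by fun_prop : Continuous _).integrableOn_uIcc

theorem ae_continuousAt_taylorKernel : ∀ᵐ t, ContinuousAt (taylorKernel a) t := by
  filter_upwards [(toFinite {0, a}).countable.ae_notMem volume] with t ht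
  refine (by fun_prop : Continuous fun t => |a - t|).continuousOn.continuousAt_indicator ?_
  rw [uIcc, frontier_Icc inf_le_sup]
  rintro (h | h) <;> apply ht <;> rw [h]
  exacts [min_choice 0 a, max_choice 0 a]

theorem integral_taylorKernel_smul {E : Type*} [NormedAddCommGroup E] [NormedSpace ℝ E]
    (F : ℝ → E) : ∫ t, taylorKernel a t • F t = ∫ t in 0..a, (a - t) • F t := by
  have hind : (fun t => taylorKernel a t • F t) =
      (uIcc 0 a).indicator fun t => |a - t| • F t := by
    ext t
    by_cases ht : t ∈ uIcc 0 a <;> simp [taylorKernel, ht]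
  rw [hind, integral_indicator measurableSet_uIcc]
  rcases le_total 0 a with ha | ha
  · rw [uIcc_of_le ha, integral_Icc_eq_integral_Ioc, intervalIntegral.integral_of_le ha]
    refine setIntegral_congr_fun measurableSet_Ioc fun t ht => ?_
    rw [abs_of_nonneg (sub_nonneg.2 ht.2)]
  · rw [uIcc_of_ge ha, integral_Icc_eq_integral_Ioc, intervalIntegral.integral_of_ge ha,
      ← integral_neg]
    refine setIntegral_congr_fun measurableSet_Ioc fun t ht => ?_
    rw [abs_of_nonpos (by linarith [ht.1]), neg_smul]

theorem integral_taylorKernel : ∫ t, taylorKernel a t = a ^ 2 / 2 := by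
  simpa [intervalIntegral.integral_comp_sub_left fun x => x]
    using integral_taylorKernel_smul a (fun _ => (1 : ℝ))

end TaylorKernel

theorem exp_sub_one_sub_eq_integral (w : ℂ) (a : ℝ) :
    cexp (a * w) - 1 - a * w = w ^ 2 * ∫ t in 0..a, (a - t) • cexp (t * w) := by
  have hderiv : ∀ t ∈ uIcc 0 a, HasDerivAt (fun t : ℝ => (w * (a - t) + 1) * cexp (t * w))
      (w ^ 2 * ((a - t) • cexp (t * w))) t := by
    intro t _
    have hexp := ((hasDerivAt_id t).ofReal_comp.mul_const w).cexp
    have hlin := ((hasDerivAt_id t).ofReal_comp.const_sub (a : ℂ)).const_mul w |>.add_const 1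
    refine (hlin.mul hexp).congr_deriv ?_
    simp only [id, ofReal_one, real_smul, ofReal_sub]
    ring
  rw [← intervalIntegral.integral_const_mul, intervalIntegral.integral_eq_sub_of_hasDerivAt hderiv
    ((by fun_prop : Continuous _).intervalIntegrable _ _)]
  simp only [sub_self, ofReal_zero, zero_mul, Complex.exp_zero]
  ring

section Convolution

variable {𝕜 G E E' F : Type*} [NontriviallyNormedField 𝕜]
  [NormedAddCommGroup E] [NormedSpace 𝕜 E] [NormedAddCommGroup E'] [NormedSpace 𝕜 E']
  [NormedAddCommGroup F] [NormedSpace 𝕜 F] [NormedSpace ℝ F]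
  [AddGroup G] [TopologicalSpace G] [IsTopologicalAddGroup G] [FirstCountableTopology G]
  [MeasurableSpace G] [MeasurableAdd G] [MeasurableNeg G]
  {μ : Measure G} [μ.IsAddLeftInvariant] [μ.IsNegInvariant]

theorem continuous_convolution_of_bounded_of_ae_continuousAt (L : E →L[𝕜] E' →L[𝕜] F)
    {f : G → E} {g : G → E'} {C : ℝ} (hf : Integrable f μ) (hg : AEStronglyMeasurable g μ)
    (hgC : ∀ x, ‖g x‖ ≤ C) (hgc : ∀ᵐ x ∂μ, ContinuousAt g x) :
    Continuous (f ⋆[L, μ] g) := by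
  refine continuous_iff_continuousAt.mpr fun x₀ => ?_
  have hbound : ∀ᶠ x in 𝓝 x₀, ∀ᵐ t ∂μ, ‖L (f t) (g (x - t))‖ ≤ ‖L‖ * ‖f t‖ * C :=
    .of_forall fun x => .of_forall fun t => L.le_of_opNorm₂_le_of_le le_rfl le_rfl (hgC _)
  refine continuousAt_of_dominated ?_ hbound (hf.norm.const_mul _ |>.mul_const _) ?_
  · refine .of_forall fun x => hf.aestronglyMeasurable.convolution_integrand_snd' L ?_
    rwa [Measure.map_sub_left_eq_self]
  · filter_upwards [(Measure.measurePreserving_sub_left μ x₀).quasiMeasurePreserving.ae hgc]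
      with t ht
    exact (L (f t)).continuous.continuousAt.comp
      (ContinuousAt.comp (x := x₀) ht (continuous_sub_right t).continuousAt)

end Convolution

theorem fourier_neg_div_two_pi_eq_integral {E : Type*} [NormedAddCommGroup E]
    [NormedSpace ℂ E] (f : ℝ → E) (z : ℝ) :
    𝓕 f (-z / (2 * π)) = ∫ t : ℝ, cexp (I * t * z) • f t := by
  rw [Real.fourier_real_eq_integral_exp_smul]
  congr 1 with t
  congr 2
  field_simp
  push_cast
  ring

theorem integral_fourier_eq_apply_zero {f : ℝ → ℂ} (hf : Integrable f)
    (hFf : Integrable (𝓕 f)) (h0 : ContinuousAt f 0) : ∫ ξ, 𝓕 f ξ = f 0 := by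
  rw [← hf.fourierInv_fourier_eq hFf h0, Real.fourierInv_eq]
  simp

theorem exp_I_mul_sub_one_sub_eq_fourier_taylorKernel (a z : ℝ) :
    cexp (I * a * z) - 1 - I * a * z =
      -z ^ 2 * 𝓕 (fun t => (taylorKernel a t : ℂ)) (-z / (2 * π)) := by
  have h := exp_sub_one_sub_eq_integral (I * z) a
  rw [← integral_taylorKernel_smul] at h
  calc cexp (I * a * z) - 1 - I * a * z = cexp (a * (I * z)) - 1 - a * (I * z) := by ring_nf
    _ = (I * z) ^ 2 * ∫ t, taylorKernel a t • cexp (t * (I * z)) := h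
    _ = _ := by
      rw [fourier_neg_div_two_pi_eq_integral, mul_pow, I_sq, neg_one_mul]
      congr 2 with t
      simp only [real_smul, smul_eq_mul]
      ring_nf

theorem norm_fourier_taylorKernel_le (a z : ℝ) :
    ‖𝓕 (fun t => (taylorKernel a t : ℂ)) (-z / (2 * π))‖ ≤ (a ^ 2 + 4 * |a|) / (1 + |z|) := by
  set F := 𝓕 (fun t => (taylorKernel a t : ℂ)) (-z / (2 * π))
  have hsmall : ‖F‖ ≤ a ^ 2 / 2 := by
    calc ‖F‖ ≤ ∫ t : ℝ, ‖cexp (I * t * z) • (taylorKernel a t : ℂ)‖ := by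
          rw [show F = _ from fourier_neg_div_two_pi_eq_integral _ z]
          exact norm_integral_le_integral_norm _
      _ = ∫ t, taylorKernel a t := by
          congr with t
          rw [norm_smul, mul_assoc, ← ofReal_mul, norm_exp_I_mul_ofReal, one_mul, norm_real,
            Real.norm_of_nonneg (taylorKernel_nonneg a t)]
      _ = a ^ 2 / 2 := integral_taylorKernel a
  have hlarge : |z| * ‖F‖ ≤ 2 * |a| := by
    have hsq : z ^ 2 * ‖F‖ ≤ 2 * |a| * |z| := by
      calc z ^ 2 * ‖F‖ = ‖cexp (I * a * z) - 1 - I * a * z‖ := by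
            rw [exp_I_mul_sub_one_sub_eq_fourier_taylorKernel, norm_mul, norm_neg, norm_pow,
              norm_real, Real.norm_eq_abs, sq_abs]
        _ ≤ ‖cexp (I * a * z) - 1‖ + ‖I * a * z‖ := norm_sub_le _ _
        _ ≤ ‖a * z‖ + ‖a * z‖ := by
            rw [mul_assoc, ← ofReal_mul]
            exact add_le_add Real.norm_exp_I_mul_ofReal_sub_one_le (by simp)
        _ = 2 * |a| * |z| := by rw [Real.norm_eq_abs, abs_mul]; ring
    rcases eq_or_ne z 0 with rfl | hz
    · simp
    nlinarith [sq_abs z, abs_pos.2 hz, norm_nonneg F]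
  rw [le_div_iff₀ (by positivity)]
  rcases le_total |z| 1 with hz | hz <;> nlinarith [norm_nonneg F, abs_nonneg a]

noncomputable def quarticIntegrand (a₁ a₂ z : ℝ) : ℂ :=
  if z = 0 then ((a₁ ^ 2 * a₂ ^ 2 / 4 : ℝ) : ℂ)
  else (cexp (I * a₁ * z) - 1 - I * a₁ * z) * (cexp (-I * a₂ * z) - 1 + I * a₂ * z) / (z : ℂ) ^ 4

theorem quarticIntegrand_eq_mul_fourier (a₁ a₂ z : ℝ) :
    quarticIntegrand a₁ a₂ z = 𝓕 (fun t => (taylorKernel a₁ t : ℂ)) (-z / (2 * π)) *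
      𝓕 (fun t => (taylorKernel (-a₂) t : ℂ)) (-z / (2 * π)) := by
  rw [quarticIntegrand]
  split_ifs with hz
  · subst hz
    simp only [fourier_neg_div_two_pi_eq_integral, ofReal_zero, mul_zero, Complex.exp_zero,
      one_smul, integral_complex_ofReal, integral_taylorKernel]
    push_cast
    ring
  · have hneg : cexp (-I * a₂ * z) - 1 + I * a₂ * z =
        cexp (I * ↑(-a₂) * z) - 1 - I * ↑(-a₂) * z := by
      push_cast
      ring_nf
    have hz' : (z : ℂ) ≠ 0 := ofReal_ne_zero.2 hz
    rw [hneg, exp_I_mul_sub_one_sub_eq_fourier_taylorKernel,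
      exp_I_mul_sub_one_sub_eq_fourier_taylorKernel]
    field_simp

theorem norm_quarticIntegrand_le (a₁ a₂ z : ℝ) :
    ‖quarticIntegrand a₁ a₂ z‖ ≤
      (a₁ ^ 2 + 4 * |a₁|) * (a₂ ^ 2 + 4 * |a₂|) * (1 + z ^ 2)⁻¹ := by
  have h₁ := norm_fourier_taylorKernel_le a₁ z
  have h₂ := norm_fourier_taylorKernel_le (-a₂) z
  rw [neg_sq, abs_neg] at h₂
  have hsq : 1 + z ^ 2 ≤ (1 + |z|) * (1 + |z|) := by nlinarith [sq_abs z, abs_nonneg z]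
  calc ‖quarticIntegrand a₁ a₂ z‖
      ≤ (a₁ ^ 2 + 4 * |a₁|) / (1 + |z|) * ((a₂ ^ 2 + 4 * |a₂|) / (1 + |z|)) := by
        rw [quarticIntegrand_eq_mul_fourier, norm_mul]
        exact mul_le_mul h₁ h₂ (norm_nonneg _) (by positivity)
    _ ≤ _ := by
        rw [div_mul_div_comm, ← div_eq_mul_inv]
        gcongr

theorem integrable_quarticIntegrand (a₁ a₂ : ℝ) : Integrable (quarticIntegrand a₁ a₂) :=
  (integrable_inv_one_add_sq.const_mul _).mono'
    (Measurable.ite (measurableSet_singleton 0) measurable_const (by fun_prop)).aestronglyMeasurable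
    (.of_forall (norm_quarticIntegrand_le a₁ a₂))

noncomputable def taylorKernelConvolution (a b : ℝ) : ℝ → ℂ :=
  (fun t => (taylorKernel a t : ℂ)) ⋆[ContinuousLinearMap.mul ℂ ℂ] fun t => (taylorKernel b t : ℂ)

theorem integrable_taylorKernelConvolution (a b : ℝ) :
    Integrable (taylorKernelConvolution a b) :=
  (integrable_taylorKernel a).ofReal.integrable_convolution _ (integrable_taylorKernel b).ofReal

theorem continuous_taylorKernelConvolution (a b : ℝ) :
    Continuous (taylorKernelConvolution a b) := by
  refine continuous_convolution_of_bounded_of_ae_continuousAt (C := |b|) _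
    (integrable_taylorKernel a).ofReal (integrable_taylorKernel b).ofReal.aestronglyMeasurable
    (fun t => ?_) ?_
  · rw [norm_real, Real.norm_of_nonneg (taylorKernel_nonneg b t)]
    exact taylorKernel_le_abs b t
  · filter_upwards [ae_continuousAt_taylorKernel b] with t ht
    exact continuous_ofReal.continuousAt.comp ht

theorem taylorKernelConvolution_neg_apply_zero (a b : ℝ) :
    taylorKernelConvolution a (-b) 0 = ((∫ t, taylorKernel a t * taylorKernel b t : ℝ) : ℂ) := by
  simp only [taylorKernelConvolution, convolution_def, ContinuousLinearMap.mul_apply', zero_sub,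
    taylorKernel_neg, ← ofReal_mul, integral_complex_ofReal]

theorem quarticIntegrand_eq_fourier_taylorKernelConvolution (a₁ a₂ z : ℝ) :
    quarticIntegrand a₁ a₂ z = 𝓕 (taylorKernelConvolution a₁ (-a₂)) (z / -(2 * π)) := by
  rw [div_neg, ← neg_div, quarticIntegrand_eq_mul_fourier]
  exact (Real.fourier_mul_convolution_eq (integrable_taylorKernel a₁).ofReal
    (integrable_taylorKernel (-a₂)).ofReal _).symm

theorem integral_sub_mul_sub (a b : ℝ) :
    ∫ t in (0 : ℝ)..a, (a - t) * (b - t) = a ^ 2 * b / 2 - a ^ 3 / 6 := by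
  have hderiv : ∀ t ∈ uIcc 0 a,
      HasDerivAt (fun t => a * b * t - (a + b) * t ^ 2 / 2 + t ^ 3 / 3) ((a - t) * (b - t)) t := by
    intro t _
    refine ((((hasDerivAt_id t).const_mul (a * b)).sub
      (((hasDerivAt_pow 2 t).const_mul (a + b)).div_const 2)).add
      ((hasDerivAt_pow 3 t).div_const 3)).congr_deriv ?_
    norm_num
    ring
  rw [intervalIntegral.integral_eq_sub_of_hasDerivAt hderiv
    ((by fun_prop : Continuous _).intervalIntegrable _ _)]
  ring

theorem integral_taylorKernel_mul_of_nonneg_of_le {a b : ℝ} (ha : 0 ≤ a) (hab : a ≤ b) :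
    ∫ t, taylorKernel a t * taylorKernel b t = a ^ 2 * b / 2 - a ^ 3 / 6 := by
  rw [← integral_sub_mul_sub]
  simp_rw [← smul_eq_mul, integral_taylorKernel_smul, smul_eq_mul]
  refine intervalIntegral.integral_congr fun t ht => ?_
  rw [uIcc_of_le ha] at ht
  have htb : t ∈ uIcc 0 b := by
    rw [uIcc_of_le (ha.trans hab)]
    exact ⟨ht.1, ht.2.trans hab⟩
  simp only [taylorKernel, indicator_of_mem htb, abs_of_nonneg (by linarith [ht.2] : 0 ≤ b - t)]

theorem integral_taylorKernel_mul_eq_zero {a b : ℝ} (ha : 0 ≤ a) (hb : b ≤ 0) :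
    ∫ t, taylorKernel a t * taylorKernel b t = 0 := by
  simp_rw [← smul_eq_mul, integral_taylorKernel_smul]
  refine intervalIntegral.integral_zero_ae (.of_forall fun t ht => ?_)
  rw [uIoc_of_le ha] at ht
  have htb : t ∉ uIcc 0 b := by
    rw [uIcc_of_ge hb]
    exact fun h => (not_lt.2 h.2) ht.1
  simp [taylorKernel, indicator_of_notMem htb]

theorem integral_taylorKernel_mul (a b : ℝ) :
    ∫ t, taylorKernel a t * taylorKernel b t =
      ((3 * b - a) * a * |a| + (3 * a - b) * b * |b| + (a - b) ^ 2 * |a - b|) / 12 := by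
  wlog hab : |a| ≤ |b| generalizing a b
  · simp_rw [mul_comm (taylorKernel a _)]
    rw [this b a (le_of_not_ge hab), abs_sub_comm]
    ring
  wlog hb : 0 ≤ b generalizing a b
  · have h := this (-a) (-b) (by simpa using hab) (by linarith)
    rw [← integral_neg_eq_self] at h
    simp only [taylorKernel_neg, abs_neg, show -a - -b = -(a - b) by ring] at h
    rw [h]
    ring
  rcases le_total 0 a with ha | ha
  · have hab' : a ≤ b := by rwa [abs_of_nonneg ha, abs_of_nonneg hb] at hab
    rw [integral_taylorKernel_mul_of_nonneg_of_le ha hab', abs_of_nonneg ha, abs_of_nonneg hb,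
      abs_of_nonpos (by linarith)]
    ring
  · simp_rw [mul_comm (taylorKernel a _)]
    rw [integral_taylorKernel_mul_eq_zero hb ha, abs_of_nonpos ha, abs_of_nonneg hb,
      abs_of_nonpos (by linarith)]
    ring

/-- `M(a₁,a₂) = ∫_{−∞}^{∞} (e^{ia₁z} − 1 − ia₁z)(e^{−ia₂z} − 1 + ia₂z)/z⁴ dz` converges and
equals `(π/6)[(3a₂−a₁)a₁|a₁| + (3a₁−a₂)a₂|a₂| + (a₁−a₂)²|a₁−a₂|]`; the integrand is
extended continuously by `a₁²a₂²/4` at `z = 0`. -/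
theorem integral_exp_prod_div_quartic (a₁ a₂ : ℝ) :
    Integrable (fun z : ℝ => if z = 0 then ((a₁ ^ 2 * a₂ ^ 2 / 4 : ℝ) : ℂ)
      else (Complex.exp (Complex.I * a₁ * z) - 1 - Complex.I * a₁ * z) *
        (Complex.exp (-Complex.I * a₂ * z) - 1 + Complex.I * a₂ * z) / (z : ℂ) ^ 4) ∧
    ∫ z : ℝ, (if z = 0 then ((a₁ ^ 2 * a₂ ^ 2 / 4 : ℝ) : ℂ)
      else (Complex.exp (Complex.I * a₁ * z) - 1 - Complex.I * a₁ * z) *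
        (Complex.exp (-Complex.I * a₂ * z) - 1 + Complex.I * a₂ * z) / (z : ℂ) ^ 4) =
      ((Real.pi / 6 * ((3 * a₂ - a₁) * a₁ * |a₁| + (3 * a₁ - a₂) * a₂ * |a₂| +
        (a₁ - a₂) ^ 2 * |a₁ - a₂|) : ℝ) : ℂ) := by
  show Integrable (quarticIntegrand a₁ a₂) ∧ ∫ z, quarticIntegrand a₁ a₂ z = _
  have hint := integrable_quarticIntegrand a₁ a₂
  have hφ : quarticIntegrand a₁ a₂ = fun z => 𝓕 (taylorKernelConvolution a₁ (-a₂)) (z / -(2 * π)) :=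
    funext (quarticIntegrand_eq_fourier_taylorKernelConvolution a₁ a₂)
  have hF : Integrable (𝓕 (taylorKernelConvolution a₁ (-a₂))) :=
    (integrable_comp_div_iff _ (neg_ne_zero.2 two_pi_pos.ne')).1 (hφ ▸ hint)
  refine ⟨hint, ?_⟩
  rw [hφ, Measure.integral_comp_div, integral_fourier_eq_apply_zero
      (integrable_taylorKernelConvolution a₁ (-a₂)) hF
      (continuous_taylorKernelConvolution a₁ (-a₂)).continuousAt,
    taylorKernelConvolution_neg_apply_zero, integral_taylorKernel_mul, abs_neg,
    abs_of_pos two_pi_pos, real_smul, ← ofReal_mul]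
  ring_nf
end
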